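/- arXiv:2105.14604 — 6 statements merged into one kernel-verified Lean document; each statement's English description precedes it below -/
import Mathlib

section
/- For positive integers a and m, the strongly stable ideals ⟨x_a^m⟩ (generated by the m-th power of the variable x_a) and ⟨x_m^a⟩ (generated by the a-th power of the variable x_m) are duals of each other. -/
/-!
Encoding conventions (used throughout):
* The paper's positive integers `ℕ = {1,2,…}` are encoded by Lean's `ℕ = {0,1,2,…}`
  via the order isomorphism `n ↦ n - 1`, in both the domain and the finite part of
  the codomain `ℕ̂ = ℕ ∪ {∞}`, the latter encoded as `ℕ∞`.  Under this shift the
  duality `D` is given by the same formula `Df(p) = min { q | f(q) > p }`.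
* Variables `x_1, x_2, …` are indexed by Lean's `0, 1, 2, …`; monomials are
  finitely supported functions `ℕ → ℕ` (exponent vectors); exponents are unshifted.
-/

noncomputable section

/-- Maps `ℕ → ℕ̂`. -/
abbrev NNhat := ℕ → ℕ∞

/-- SmallMap maps: all values bounded by some natural number. -/
def SmallMap (f : NNhat) : Prop := ∃ N : ℕ, ∀ n, f n ≤ (N : ℕ∞)

/-- LargeMap maps: some value equals `∞`. -/
def LargeMap (f : NNhat) : Prop := ∃ n, f n = ⊤

/-- Maps with all values finite and unbounded image. -/
def UnbFinMap (f : NNhat) : Prop := (∀ n, f n ≠ ⊤) ∧ ∀ N : ℕ, ∃ n, (N : ℕ∞) < f n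

/-- The duality `D`: `Df(p) = min { q : f(q) > p }`, the min of the empty set being `∞`. -/
def Ddual (f : NNhat) : NNhat := fun p =>
  sInf ((fun q : ℕ => (q : ℕ∞)) '' {q : ℕ | (p : ℕ∞) < f q})

/-- The poset `Hom(ℕ, ℕ̂)` of monotone maps, ordered pointwise. -/
abbrev HomNN := {f : NNhat // Monotone f}

/-- The topology on `Hom(ℕ, ℕ̂)` with basis the intervals `U(f̲, f̄)` with `f̲` small
and `f̄` large. -/
instance (priority := 10000) : TopologicalSpace HomNN :=
  TopologicalSpace.generateFrom
    {S | ∃ a b : HomNN, SmallMap a.1 ∧ LargeMap b.1 ∧ S = {f : HomNN | a ≤ f ∧ f ≤ b}}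

/-- Monomials: finitely supported functions `ℕ → ℕ` (exponent vectors). -/
def Mon : Set (ℕ → ℕ) := {u | (Function.support u).Finite}

/-- `Γ f = ∏_{f(i) < ∞} x_{f(i)}` : the exponent of `x_j` is `#{i | f(i) = j}`. -/
def Gmap (f : NNhat) : ℕ → ℕ := fun j => Nat.card {i : ℕ // f i = (j : ℕ∞)}

/-- `Λ f = ∏_{i ≥ 1} x_i^{f(i) - f(i-1)}` (with the convention `f(0) = 1`, i.e. the
shifted convention `f(-1) = 0`). -/
def Lmap (f : NNhat) : ℕ → ℕ := fun i =>
  match i with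
  | 0 => (f 0).toNat
  | k + 1 => (f (k + 1)).toNat - (f k).toNat

/-- The exponent vector of the variable `x_i`. -/
def xvar (i : ℕ) : ℕ → ℕ := fun k => if k = i then 1 else 0

/-- One generating step of the strongly stable order: `stStep a b` means `a ≥_st b`
by one of the defining relations `x_i·w ≥_st x_j·w` (`i ≤ j`) or `x_i·b ≥_st b`. -/
def stStep (a b : ℕ → ℕ) : Prop :=
  (∃ i j w, i ≤ j ∧ a = w + xvar i ∧ b = w + xvar j) ∨ (∃ i, a = b + xvar i)

/-- The strongly stable order: `stGE u v` means `u ≥_st v`. -/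
def stGE (u v : ℕ → ℕ) : Prop := Relation.ReflTransGen stStep u v

/-- A strongly stable ideal: a set of monomials upward closed under `≥_st`. -/
def IsSStableIdeal (I : Set (ℕ → ℕ)) : Prop :=
  I ⊆ Mon ∧ ∀ u ∈ I, ∀ v, stGE v u → v ∈ I

/-- The smallest strongly stable ideal containing the set `G` of monomials. -/
def sstSpan (G : Set (ℕ → ℕ)) : Set (ℕ → ℕ) := {v | ∃ u ∈ G, stGE v u}

/-- `Γ(ℐ^L)`: the set of monomials `Γ f` for `f` large in `ℐ`. -/
def GammaIdeal (ℐ : Set HomNN) : Set (ℕ → ℕ) :=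
  {u | ∃ f ∈ ℐ, LargeMap f.1 ∧ u = Gmap f.1}

/-- `Λ(ℱ_S)`: the set of monomials `Λ f` for `f` small in `ℱ`. -/
def LambdaIdeal (ℱ : Set HomNN) : Set (ℕ → ℕ) :=
  {u | ∃ f ∈ ℱ, SmallMap f.1 ∧ u = Lmap f.1}

/-- `I` is a dualizable strongly stable ideal with dual strongly stable ideal `J`:
the open poset ideal `ℐ` corresponding to `I` is regular open, and `J` is obtained
from the interior `ℱ` of the complement of `ℐ` as `Λ(ℱ_S)`. -/
def IsDualPair (I J : Set (ℕ → ℕ)) : Prop :=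
  ∃ ℐ : Set HomNN, IsOpen ℐ ∧ IsLowerSet ℐ ∧ ℐ = interior (closure ℐ) ∧
    GammaIdeal ℐ = I ∧ LambdaIdeal (interior ℐᶜ) = J

/-- Strict lexicographic order `f ≻_lex g`: at the least index where they differ,
`f` is larger. -/
def lexGT (f g : NNhat) : Prop := ∃ r, (∀ i < r, f i = g i) ∧ g r < f r

/-- `f ⪰_lex g`. -/
def lexGE (f g : NNhat) : Prop := f = g ∨ lexGT f g

/-- The single monomial `x_{i+1}^e` (Lean variable index `i`). -/
def singleMon (i e : ℕ) : ℕ → ℕ := fun j => if j = i then e else 0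

end

noncomputable section

section
namespace Stmt9

lemma singleMon_apply (i e j : ℕ) : singleMon i e j = if j = i then e else 0 := rfl

lemma sum_xvar (i n : ℕ) : ∑ k ∈ Finset.range n, xvar i k = if i < n then 1 else 0 := by
  simp [xvar, Finset.sum_ite_eq', Finset.mem_range]

lemma sum_singleMon (i e n : ℕ) :
    ∑ k ∈ Finset.range n, singleMon i e k = if i < n then e else 0 := by
  simp [singleMon, Finset.sum_ite_eq', Finset.mem_range]

lemma stGE_add (d : ℕ) : ∀ w : ℕ → ℕ, ∀ n, (∀ j, n ≤ j → w j = 0) →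
    (∑ j ∈ Finset.range n, w j = d) → ∀ v, stGE (v + w) v := by
  induction d with
  | zero =>
    intro w n hn hs v
    have hw : w = 0 := funext fun j => by
      by_cases h : j < n
      · exact (Finset.sum_eq_zero_iff.mp hs) j (Finset.mem_range.mpr h)
      · exact hn j (by omega)
    rw [hw, add_zero]
    exact Relation.ReflTransGen.refl
  | succ d ih =>
    intro w n hn hs v
    have hne : ∃ i ∈ Finset.range n, w i ≠ 0 :=
      Finset.exists_ne_zero_of_sum_ne_zero (by omega)
    obtain ⟨i, hi, hwi⟩ := hne
    have hi' : i < n := Finset.mem_range.mp hi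
    set w' : ℕ → ℕ := fun j => if j = i then w j - 1 else w j with hw'def
    have hw : w = w' + xvar i := funext fun k => by
      by_cases h : k = i
      · subst h; simp [hw'def, xvar]; omega
      · simp [hw'def, xvar, h]
    have hsum' : ∑ j ∈ Finset.range n, w' j = d := by
      have := congrArg (fun u => ∑ j ∈ Finset.range n, u j) hw
      simp only [Pi.add_apply, Finset.sum_add_distrib, sum_xvar] at this
      rw [if_pos hi'] at this
      omega
    have hn' : ∀ j, n ≤ j → w' j = 0 := fun j hj => by
      have : j ≠ i := by omega
      simp [hw'def, this, hn j hj]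
    refine Relation.ReflTransGen.head (Or.inr ⟨i, ?_⟩) (ih w' n hn' hsum' v)
    rw [hw, add_assoc]

lemma stGE_push (c : ℕ) : ∀ k, ∀ v : ℕ → ℕ, (∀ j, c < j → v j = 0) →
    (∑ j ∈ Finset.range c, v j = k) →
    stGE v (singleMon c (∑ j ∈ Finset.range (c+1), v j)) := by
  intro k
  induction k with
  | zero =>
    intro v hbig hs
    have hzero : ∀ j, j < c → v j = 0 := fun j hj =>
      (Finset.sum_eq_zero_iff.mp hs) j (Finset.mem_range.mpr hj)
    have hS : ∑ j ∈ Finset.range (c+1), v j = v c := by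
      rw [Finset.sum_range_succ, hs, zero_add]
    have hv : v = singleMon c (∑ j ∈ Finset.range (c+1), v j) := funext fun j => by
      rcases lt_trichotomy j c with h | h | h
      · simp [singleMon, Nat.ne_of_lt h, hzero j h]
      · subst h; simp [singleMon, hS]
      · simp [singleMon, Nat.ne_of_gt h, hbig j h]
    rw [← hv]
    exact Relation.ReflTransGen.refl
  | succ k ih =>
    intro v hbig hs
    have hne : ∃ i ∈ Finset.range c, v i ≠ 0 :=
      Finset.exists_ne_zero_of_sum_ne_zero (by omega)
    obtain ⟨i, hi, hvi⟩ := hne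
    have hi' : i < c := Finset.mem_range.mp hi
    set w : ℕ → ℕ := fun j => if j = i then v j - 1 else v j with hwdef
    have hv : v = w + xvar i := funext fun j => by
      by_cases h : j = i
      · subst h; simp [hwdef, xvar]; omega
      · simp [hwdef, xvar, h]
    set v' : ℕ → ℕ := w + xvar c with hv'def
    have hbig' : ∀ j, c < j → v' j = 0 := fun j hj => by
      have h1 : j ≠ i := by omega
      have h2 : j ≠ c := by omega
      simp [hv'def, hwdef, xvar, h1, h2, hbig j hj]
    have hsw : ∑ j ∈ Finset.range c, w j = k := by
      have := congrArg (fun u => ∑ j ∈ Finset.range c, u j) hv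
      simp only [Pi.add_apply, Finset.sum_add_distrib, sum_xvar] at this
      rw [if_pos hi'] at this
      omega
    have hs' : ∑ j ∈ Finset.range c, v' j = k := by
      simp only [hv'def, Pi.add_apply, Finset.sum_add_distrib, sum_xvar, lt_irrefl,
        if_neg (lt_irrefl c), add_zero]
      exact hsw
    have hSeq : ∑ j ∈ Finset.range (c+1), v' j = ∑ j ∈ Finset.range (c+1), v j := by
      rw [hv]
      simp only [hv'def, Pi.add_apply, Finset.sum_add_distrib, sum_xvar]
      simp [Nat.lt_succ_iff, hi'.le]
    refine Relation.ReflTransGen.head (Or.inl ⟨i, c, w, le_of_lt hi', hv, rfl⟩) ?_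
    rw [← hSeq]
    exact ih v' hbig' hs'

lemma exists_bound {v : ℕ → ℕ} (h : (Function.support v).Finite) :
    ∃ n, ∀ j, n ≤ j → v j = 0 := by
  obtain ⟨n, hn⟩ := h.bddAbove
  refine ⟨n + 1, fun j hj => ?_⟩
  by_contra hc
  have := hn (Function.mem_support.mpr hc)
  omega

lemma stGE_singleMon_iff (c e : ℕ) (v : ℕ → ℕ) :
    stGE v (singleMon c e) ↔
      (Function.support v).Finite ∧ e ≤ ∑ j ∈ Finset.range (c+1), v j := by
  constructor
  · intro h
    induction h using Relation.ReflTransGen.head_induction_on with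
    | refl =>
      refine ⟨Set.Finite.subset (Set.finite_singleton c) ?_, by simp [sum_singleMon]⟩
      intro j hj
      simp only [Function.mem_support, singleMon] at hj
      by_contra hne
      simp [Set.mem_singleton_iff] at hne
      simp [hne] at hj
    | head hstep _ ihb =>
      rename_i x b _
      obtain ⟨hbfin, hbsum⟩ := ihb
      rcases hstep with ⟨i, j, w, hij, hx, hb⟩ | ⟨i, hx⟩
      · subst hx; subst hb
        have hsupp : Function.support (w + xvar i) ⊆ Function.support (w + xvar j) ∪ {i} := by
          intro k hk
          by_cases h : k = i
          · exact Or.inr h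
          · left
            simp only [Function.mem_support, Pi.add_apply, xvar, h, if_false, add_zero] at hk
            simp only [Function.mem_support, Pi.add_apply]
            intro hc0
            exact hk (by omega)
        refine ⟨(hbfin.union (Set.finite_singleton i)).subset hsupp, ?_⟩
        have h1 : ∑ k ∈ Finset.range (c+1), (w + xvar i) k
            = (∑ k ∈ Finset.range (c+1), w k) + (if i < c+1 then 1 else 0) := by
          simp [Finset.sum_add_distrib, sum_xvar]
        have h2 : ∑ k ∈ Finset.range (c+1), (w + xvar j) k
            = (∑ k ∈ Finset.range (c+1), w k) + (if j < c+1 then 1 else 0) := by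
          simp [Finset.sum_add_distrib, sum_xvar]
        rw [h2] at hbsum
        rw [h1]
        by_cases hj : j < c + 1
        · have hic : i < c + 1 := by omega
          rw [if_pos hj] at hbsum
          rw [if_pos hic]
          omega
        · rw [if_neg hj] at hbsum
          split <;> omega
      · subst hx
        have hsupp : Function.support (b + xvar i) ⊆ Function.support b ∪ {i} := by
          intro k hk
          by_cases h : k = i
          · exact Or.inr h
          · left
            simp only [Function.mem_support, Pi.add_apply, xvar, h, if_false, add_zero] at hk
            exact hk
        refine ⟨(hbfin.union (Set.finite_singleton i)).subset hsupp, ?_⟩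
        have h1 : ∑ k ∈ Finset.range (c+1), (b + xvar i) k
            = (∑ k ∈ Finset.range (c+1), b k) + (if i < c+1 then 1 else 0) := by
          simp [Finset.sum_add_distrib, sum_xvar]
        rw [h1]
        split <;> omega
  · rintro ⟨hfin, hsum⟩
    obtain ⟨n, hn⟩ := exists_bound hfin
    set v₁ : ℕ → ℕ := fun j => if j ≤ c then v j else 0 with hv₁
    set v₂ : ℕ → ℕ := fun j => if j ≤ c then 0 else v j with hv₂
    have hv : v = v₁ + v₂ := funext fun j => by
      by_cases h : j ≤ c <;> simp [hv₁, hv₂, h]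
    have h1 : stGE v v₁ := by
      rw [hv]
      exact stGE_add _ v₂ n (fun j hj => by
        by_cases h : j ≤ c <;> simp [hv₂, h, hn j hj]) rfl v₁
    have hbig1 : ∀ j, c < j → v₁ j = 0 := fun j hj => by
      simp [hv₁, Nat.not_le.mpr hj]
    have h2 : stGE v₁ (singleMon c (∑ j ∈ Finset.range (c+1), v₁ j)) :=
      stGE_push c _ v₁ hbig1 rfl
    have hSeq : ∑ j ∈ Finset.range (c+1), v₁ j = ∑ j ∈ Finset.range (c+1), v j :=
      Finset.sum_congr rfl fun j hj => by
        simp [hv₁, Nat.lt_succ_iff.mp (Finset.mem_range.mp hj)]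
    rw [hSeq] at h2
    set S := ∑ j ∈ Finset.range (c+1), v j with hS
    have h3 : stGE (singleMon c S) (singleMon c e) := by
      have hdecomp : singleMon c S = singleMon c e + singleMon c (S - e) := funext fun j => by
        by_cases h : j = c
        · subst h; simp [singleMon]; omega
        · simp [singleMon, h]
      rw [hdecomp]
      exact stGE_add (S - e) (singleMon c (S - e)) (c+1)
        (fun j hj => by rw [singleMon_apply, if_neg (by omega : ¬ j = c)])
        (by simp [sum_singleMon]) _
    exact (h1.trans h2).trans h3

end Stmt9
end

namespace Stmt9

lemma Gmap_spec {f : NNhat} (hmono : Monotone f) (hL : LargeMap f) {c d : ℕ}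
    (hfd : f d ≤ (c : ℕ∞)) :
    (Function.support (Gmap f)).Finite ∧ d + 1 ≤ ∑ j ∈ Finset.range (c+1), Gmap f j := by
  obtain ⟨n, hn⟩ := hL
  have htop : ∀ i, n ≤ i → f i = ⊤ := fun i hi => top_le_iff.mp (hn ▸ hmono hi)
  have hlt : ∀ (j i : ℕ), f i = (j : ℕ∞) → i < n := by
    intro j i h
    by_contra hc
    rw [htop i (by omega)] at h
    exact (ENat.top_ne_coe j) h
  set A : ℕ → Finset ℕ := fun j => (Finset.range n).filter (fun i => f i = (j : ℕ∞)) with hA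
  have hset : ∀ j : ℕ, {i : ℕ | f i = (j : ℕ∞)} = (A j : Set ℕ) := by
    intro j
    ext i
    simp only [Set.mem_setOf_eq, hA, Finset.coe_filter, Finset.mem_range]
    exact ⟨fun h => ⟨hlt j i h, h⟩, fun h => h.2⟩
  have hG : ∀ j : ℕ, Gmap f j = (A j).card := by
    intro j
    have h1 : Gmap f j = Nat.card {i : ℕ | f i = (j : ℕ∞)} := rfl
    rw [h1, hset j, Nat.card_coe_set_eq, Set.ncard_coe_finset]
  constructor
  · have : Function.support (Gmap f) ⊆ (fun i => (f i).toNat) '' (Set.Iio n) := by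
      intro j hj
      rw [Function.mem_support, hG j] at hj
      obtain ⟨i, hi⟩ := Finset.card_ne_zero.mp hj
      simp only [hA, Finset.mem_filter, Finset.mem_range] at hi
      exact ⟨i, hi.1, by show (f i).toNat = j; rw [hi.2, ENat.toNat_coe]⟩
    exact ((Set.finite_Iio n).image _).subset this
  · set B : Finset ℕ := (Finset.range n).filter (fun i => f i ≤ (c : ℕ∞)) with hB
    have hcard : B.card = ∑ j ∈ Finset.range (c+1), (B.filter (fun i => (f i).toNat = j)).card := by
      apply Finset.card_eq_sum_card_fiberwise
      intro i hi
      simp only [hB, Finset.mem_coe, Finset.mem_filter] at hi ⊢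
      rw [Finset.mem_range, Nat.lt_succ_iff]
      have := ENat.toNat_le_toNat hi.2 (ENat.coe_ne_top c)
      simpa using this
    have hfib : ∀ j ∈ Finset.range (c+1), B.filter (fun i => (f i).toNat = j) = A j := by
      intro j hj
      rw [Finset.mem_range, Nat.lt_succ_iff] at hj
      ext i
      simp only [hB, hA, Finset.mem_filter, Finset.mem_range]
      constructor
      · rintro ⟨⟨hin, hle⟩, htn⟩
        refine ⟨hin, ?_⟩
        have hne : f i ≠ ⊤ := fun h => by rw [h] at hle; exact absurd (top_le_iff.mp hle) (by simp)
        rw [← ENat.coe_toNat hne, htn]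
      · rintro ⟨hin, heq⟩
        refine ⟨⟨hin, ?_⟩, ?_⟩
        · rw [heq]; exact_mod_cast Nat.cast_le.mpr hj
        · rw [heq, ENat.toNat_coe]
    have hsub : Finset.range (d+1) ⊆ B := by
      intro i hi
      rw [Finset.mem_range, Nat.lt_succ_iff] at hi
      have hle : f i ≤ (c : ℕ∞) := le_trans (hmono hi) hfd
      have : i < n := by
        by_contra hc2
        rw [htop i (by omega)] at hle
        exact absurd (top_le_iff.mp hle) (by simp)
      simp [hB, Finset.mem_filter, Finset.mem_range, this, hle]
    calc d + 1 = (Finset.range (d+1)).card := by rw [Finset.card_range]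
      _ ≤ B.card := Finset.card_le_card hsub
      _ = ∑ j ∈ Finset.range (c+1), (B.filter (fun i => (f i).toNat = j)).card := hcard
      _ = ∑ j ∈ Finset.range (c+1), (A j).card := Finset.sum_congr rfl (fun j hj => by rw [hfib j hj])
      _ = ∑ j ∈ Finset.range (c+1), Gmap f j := Finset.sum_congr rfl (fun j _ => (hG j).symm)

lemma Gmap_exists {v : ℕ → ℕ} {n : ℕ} (hn : ∀ j, n ≤ j → v j = 0) {c d : ℕ}
    (hsum : d + 1 ≤ ∑ j ∈ Finset.range (c+1), v j) :
    ∃ f : NNhat, Monotone f ∧ f d ≤ (c : ℕ∞) ∧ LargeMap f ∧ Gmap f = v := by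
  classical
  set P : ℕ → ℕ := fun j => ∑ j' ∈ Finset.range (j+1), v j' with hP
  set pre : ℕ → ℕ := fun j => ∑ j' ∈ Finset.range j, v j' with hpre
  have hPmono : Monotone P := fun j j' hj =>
    Finset.sum_le_sum_of_subset (Finset.range_subset_range.mpr (by omega))
  have hprele : ∀ j' j : ℕ, j' < j → P j' ≤ pre j := fun j' j hj =>
    Finset.sum_le_sum_of_subset (Finset.range_subset_range.mpr (by omega))
  have hprev : ∀ j, P j = pre j + v j := fun j => Finset.sum_range_succ v j
  set f : NNhat := fun i => if h : ∃ j, i < P j then ((Nat.find h : ℕ) : ℕ∞) else ⊤ with hf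
  have hmono : Monotone f := by
    intro i i' hii'
    by_cases h' : ∃ j, i' < P j
    · have h : ∃ j, i < P j := ⟨h'.choose, lt_of_le_of_lt hii' h'.choose_spec⟩
      rw [hf]
      simp only [dif_pos h, dif_pos h']
      exact_mod_cast Nat.find_mono (fun j hj => lt_of_le_of_lt hii' hj)
    · rw [hf]; simp only [dif_neg h']; exact le_top
  have hfiber : ∀ j : ℕ, {i : ℕ | f i = (j : ℕ∞)} = Set.Ico (pre j) (P j) := by
    intro j
    ext i
    simp only [Set.mem_setOf_eq, Set.mem_Ico]
    constructor
    · intro h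
      rw [hf] at h
      by_cases hex : ∃ j', i < P j'
      · simp only [dif_pos hex] at h
        have hfind : Nat.find hex = j := by exact_mod_cast h
        have h1 : i < P j := hfind ▸ Nat.find_spec hex
        have h2 : pre j ≤ i := by
          cases j with
          | zero => simp [hpre]
          | succ j' =>
            have : ¬ i < P j' := Nat.find_min hex (by omega)
            have : P j' ≤ i := by omega
            simpa [hpre, hP, Finset.sum_range_succ] using this
        exact ⟨h2, h1⟩
      · simp only [dif_neg hex] at h
        exact absurd h.symm (ENat.coe_ne_top j)
    · rintro ⟨h1, h2⟩
      have hex : ∃ j', i < P j' := ⟨j, h2⟩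
      rw [hf]
      simp only [dif_pos hex]
      have : Nat.find hex = j := by
        rw [Nat.find_eq_iff]
        refine ⟨h2, fun j' hj' => ?_⟩
        have := le_trans (hprele j' j hj') h1
        omega
      exact congrArg (fun k : ℕ => (k : ℕ∞)) this
  have hGmap : Gmap f = v := by
    funext j
    have h1 : Gmap f j = Nat.card {i : ℕ | f i = (j : ℕ∞)} := rfl
    rw [h1, hfiber j, ← Finset.coe_Ico, Nat.card_coe_set_eq, Set.ncard_coe_finset,
      Nat.card_Ico]
    rw [hprev j]; omega
  have hPconst : ∀ j, n ≤ j → P j = P n := fun j hj =>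
    (Finset.sum_subset (Finset.range_subset_range.mpr (by omega))
      (fun x _ hx2 => hn x (by simp only [Finset.mem_range] at hx2; omega))).symm
  have hPbound : ∀ j, P j ≤ P n := fun j => by
    rcases le_or_gt j n with h | h
    · exact hPmono h
    · exact (hPconst j h.le).le
  have hlarge : LargeMap f := by
    refine ⟨P n, ?_⟩
    have hno : ¬ ∃ j, P n < P j := by push_neg; intro j; exact hPbound j
    rw [hf]
    exact dif_neg hno
  have hfd : f d ≤ (c : ℕ∞) := by
    have hPc : d < P c := by simp only [hP]; omega
    have hex : ∃ j, d < P j := ⟨c, hPc⟩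
    rw [hf]
    simp only [dif_pos hex]
    exact_mod_cast Nat.find_min' hex hPc
  exact ⟨f, hmono, hfd, hlarge, hGmap⟩

end Stmt9

namespace Stmt9

lemma Lmap_spec {g : NNhat} (hmono : Monotone g) {N : ℕ} (hN : ∀ i, g i ≤ (N : ℕ∞))
    {c d : ℕ} (hgd : (c : ℕ∞) < g d) :
    (Function.support (Lmap g)).Finite ∧ c + 1 ≤ ∑ i ∈ Finset.range (d+1), Lmap g i := by
  have gne : ∀ i, g i ≠ ⊤ := fun i => ne_top_of_le_ne_top (ENat.coe_ne_top N) (hN i)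
  set t : ℕ → ℕ := fun i => (g i).toNat with ht
  have tmono : ∀ i i', i ≤ i' → t i ≤ t i' := fun i i' h =>
    ENat.toNat_le_toNat (hmono h) (gne i')
  have tbound : ∀ i, t i ≤ N := fun i => by
    have := ENat.toNat_le_toNat (hN i) (ENat.coe_ne_top N)
    simpa using this
  have key : ∀ k, ∑ i ∈ Finset.range (k+1), Lmap g i = t k := by
    intro k
    induction k with
    | zero => simp [Lmap, ht]
    | succ k ih =>
      rw [Finset.sum_range_succ, ih]
      have h1 : t k ≤ t (k+1) := tmono k (k+1) (by omega)
      show t k + ((g (k+1)).toNat - (g k).toNat) = t (k+1)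
      simp only [ht] at h1 ⊢
      omega
  constructor
  · have hsm : StrictMonoOn t (Function.support (Lmap g)) := by
      intro i hi i' hi' hlt
      rw [Function.mem_support] at hi'
      obtain ⟨k, rfl⟩ : ∃ k, i' = k + 1 := ⟨i' - 1, by omega⟩
      have h2 : (g (k+1)).toNat - (g k).toNat ≠ 0 := hi'
      have h3 : t i ≤ t k := tmono i k (by omega)
      show t i < t (k+1)
      simp only [ht] at h3 ⊢
      omega
    have himg : (t '' Function.support (Lmap g)).Finite :=
      (Set.finite_Iic N).subset (by rintro x ⟨i, _, rfl⟩; exact tbound i)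
    exact Set.Finite.of_finite_image himg hsm.injOn
  · rw [key d]
    have hgd' : g d = ((t d : ℕ) : ℕ∞) := (ENat.coe_toNat (gne d)).symm
    rw [hgd'] at hgd
    exact_mod_cast hgd

lemma Lmap_exists {v : ℕ → ℕ} {n : ℕ} (hn : ∀ j, n ≤ j → v j = 0) {c d : ℕ}
    (hsum : c + 1 ≤ ∑ i ∈ Finset.range (d+1), v i) :
    ∃ g : NNhat, Monotone g ∧ (c : ℕ∞) < g d ∧ SmallMap g ∧ Lmap g = v := by
  set g : NNhat := fun k => ((∑ i ∈ Finset.range (k+1), v i : ℕ) : ℕ∞) with hg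
  have hmono : Monotone g := fun k k' h => by
    simp only [hg, Nat.cast_le]
    exact Finset.sum_le_sum_of_subset (Finset.range_subset_range.mpr (by omega))
  have hsmall : SmallMap g := by
    refine ⟨∑ i ∈ Finset.range n, v i, fun k => ?_⟩
    simp only [hg, Nat.cast_le]
    calc ∑ i ∈ Finset.range (k+1), v i ≤ ∑ i ∈ Finset.range (n+k+1), v i :=
          Finset.sum_le_sum_of_subset (Finset.range_subset_range.mpr (by omega))
      _ = ∑ i ∈ Finset.range n, v i :=
          (Finset.sum_subset (Finset.range_subset_range.mpr (by omega))
            (fun x _ hx2 => hn x (by simp only [Finset.mem_range] at hx2; omega))).symm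
  have hgd : (c : ℕ∞) < g d := by
    simp only [hg, Nat.cast_lt]
    omega
  have hL : Lmap g = v := by
    funext k
    cases k with
    | zero =>
      show (g 0).toNat = v 0
      simp [hg]
    | succ k =>
      show (g (k+1)).toNat - (g k).toNat = v (k+1)
      simp only [hg, ENat.toNat_coe]
      rw [Finset.sum_range_succ v (k+1)]
      omega
  exact ⟨g, hmono, hgd, hsmall, hL⟩

end Stmt9

namespace Stmt9

lemma interval_isOpen (lo hi : HomNN) (hlo : SmallMap lo.1) (hhi : LargeMap hi.1) :
    IsOpen {f : HomNN | lo ≤ f ∧ f ≤ hi} :=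
  TopologicalSpace.GenerateOpen.basic _ ⟨lo, hi, hlo, hhi, rfl⟩

lemma sstSpan_singleton (u : ℕ → ℕ) : sstSpan {u} = {v | stGE v u} := by
  ext v; simp [sstSpan]

end Stmt9


open Stmt9 in
/-- `⟨x_a^m⟩` and `⟨x_m^a⟩` are dual strongly stable ideals
(the variable `x_k` has Lean index `k - 1`). -/
theorem stmt9 (a m : ℕ) (ha : 1 ≤ a) (hm : 1 ≤ m) :
    IsDualPair (sstSpan {singleMon (a - 1) m}) (sstSpan {singleMon (m - 1) a}) := by
  obtain ⟨c, rfl⟩ : ∃ c, a = c + 1 := ⟨a - 1, by omega⟩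
  obtain ⟨d, rfl⟩ : ∃ d, m = d + 1 := ⟨m - 1, by omega⟩
  simp only [Nat.add_sub_cancel]
  set ℐ : Set HomNN := {f : HomNN | f.1 d ≤ (c : ℕ∞)} with hI
  have hmono_ub : Monotone (fun i => if i ≤ d then (c:ℕ∞) else ⊤ : ℕ → ℕ∞) := by
    intro i j hij
    show (if i ≤ d then (c:ℕ∞) else ⊤) ≤ (if j ≤ d then (c:ℕ∞) else ⊤)
    by_cases h : j ≤ d
    · rw [if_pos (le_trans hij h), if_pos h]
    · simp [h]
  set ub : HomNN := ⟨fun i => if i ≤ d then (c:ℕ∞) else ⊤, hmono_ub⟩ with hub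
  set bot : HomNN := ⟨fun _ => 0, monotone_const⟩ with hbot
  have hmono_lb : Monotone (fun i => if d ≤ i then ((c+1:ℕ):ℕ∞) else 0 : ℕ → ℕ∞) := by
    intro i j hij
    show (if d ≤ i then ((c+1:ℕ):ℕ∞) else 0) ≤ (if d ≤ j then ((c+1:ℕ):ℕ∞) else 0)
    by_cases h : d ≤ i
    · rw [if_pos h, if_pos (le_trans h hij)]
    · simp [h]
  set lb : HomNN := ⟨fun i => if d ≤ i then ((c+1:ℕ):ℕ∞) else 0, hmono_lb⟩ with hlb
  set topf : HomNN := ⟨fun _ => ⊤, monotone_const⟩ with htopf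
  have hIeq : ℐ = {f : HomNN | bot ≤ f ∧ f ≤ ub} := by
    ext f
    simp only [hI, Set.mem_setOf_eq]
    constructor
    · intro hf
      refine ⟨fun i => zero_le, fun i => ?_⟩
      show f.1 i ≤ (if i ≤ d then (c:ℕ∞) else ⊤)
      by_cases h : i ≤ d
      · rw [if_pos h]; exact le_trans (f.2 h) hf
      · rw [if_neg h]; exact le_top
    · rintro ⟨-, hf⟩
      have := hf d
      simpa [hub] using this
  have hIceq : ℐᶜ = {f : HomNN | lb ≤ f ∧ f ≤ topf} := by
    ext f
    simp only [Set.mem_compl_iff, hI, Set.mem_setOf_eq, not_le]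
    constructor
    · intro hf
      refine ⟨fun i => ?_, fun i => le_top⟩
      show (if d ≤ i then ((c+1:ℕ):ℕ∞) else 0) ≤ f.1 i
      by_cases h : d ≤ i
      · rw [if_pos h]
        refine le_trans ?_ (f.2 h)
        exact Order.add_one_le_of_lt (by exact_mod_cast hf)
      · rw [if_neg h]; exact zero_le
    · rintro ⟨hf, -⟩
      have h1 := hf d
      simp only [hlb, le_refl, if_pos] at h1
      calc (c:ℕ∞) < ((c+1:ℕ):ℕ∞) := by exact_mod_cast Nat.lt_succ_self c
        _ ≤ f.1 d := h1
  have hIopen : IsOpen ℐ := by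
    rw [hIeq]
    exact interval_isOpen bot ub ⟨0, fun n => by simp [hbot]⟩
      ⟨d+1, by simp [hub]⟩
  have hIcopen : IsOpen ℐᶜ := by
    rw [hIceq]
    refine interval_isOpen lb topf ⟨c+1, fun i => ?_⟩ ⟨0, rfl⟩
    show (if d ≤ i then ((c+1:ℕ):ℕ∞) else 0) ≤ ((c+1:ℕ):ℕ∞)
    by_cases h : d ≤ i
    · rw [if_pos h]
    · rw [if_neg h]; exact zero_le
  refine ⟨ℐ, hIopen, ?_, ?_, ?_, ?_⟩
  · intro f g hgf hf
    exact le_trans (hgf d) hf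
  · rw [(isOpen_compl_iff.mp hIcopen).closure_eq, hIopen.interior_eq]
  · rw [sstSpan_singleton]
    ext v
    simp only [GammaIdeal, Set.mem_setOf_eq, stGE_singleMon_iff]
    constructor
    · rintro ⟨f, hf, hLf, rfl⟩
      exact Gmap_spec f.2 hLf hf
    · rintro ⟨hfin, hsum⟩
      obtain ⟨n, hn⟩ := exists_bound hfin
      obtain ⟨f, hmono, hfd, hlarge, hG⟩ := Gmap_exists hn hsum
      exact ⟨⟨f, hmono⟩, hfd, hlarge, hG.symm⟩
  · rw [hIcopen.interior_eq, sstSpan_singleton]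
    ext v
    simp only [LambdaIdeal, Set.mem_setOf_eq, stGE_singleMon_iff]
    constructor
    · rintro ⟨g, hg, ⟨N, hN⟩, rfl⟩
      have hgd : (c : ℕ∞) < g.1 d := lt_of_not_ge hg
      exact Lmap_spec g.2 hN hgd
    · rintro ⟨hfin, hsum⟩
      obtain ⟨n, hn⟩ := exists_bound hfin
      obtain ⟨g, hmono, hgd, hsmall, hL⟩ := Lmap_exists hn hsum
      exact ⟨⟨g, hmono⟩, not_le.mpr hgd, hsmall, hL.symm⟩

end
end

section
/- Let I_1 and I_2 be dualizable strongly stable ideals with dual strongly stable ideals J_1 and J_2. Then the sum I_1 + I_2 (whose set of monomials is I_1 ∪ I_2) is a dualizable strongly stable ideal with dual J_1 ∩ J_2. In particular, if I_1 is dualizable and I_2 is finitely generated, then I_1 + I_2 is dualizable. -/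
noncomputable section
open Set TopologicalSpace

def Bgen : Set (Set HomNN) :=
  {S | ∃ a b : HomNN, SmallMap a.1 ∧ LargeMap b.1 ∧ S = {f : HomNN | a ≤ f ∧ f ≤ b}}

lemma homNN_le_iff {f g : HomNN} : f ≤ g ↔ ∀ n, f.1 n ≤ g.1 n := Iff.rfl

lemma large_mono {b : NNhat} (hb : Monotone b) {n m : ℕ} (h : b n = ⊤) (hnm : n ≤ m) :
    b m = ⊤ := top_le_iff.mp (h ▸ hb hnm)

def botH : HomNN := ⟨fun _ => 0, fun _ _ _ => le_rfl⟩
def topH : HomNN := ⟨fun _ => ⊤, fun _ _ _ => le_rfl⟩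

lemma small_botH : SmallMap botH.1 := ⟨0, fun _ => by simp [botH]⟩
lemma large_topH : LargeMap topH.1 := ⟨0, rfl⟩

def supH (f g : HomNN) : HomNN := ⟨fun n => f.1 n ⊔ g.1 n,
  fun _ _ h => sup_le_sup (f.2 h) (g.2 h)⟩
def infH (f g : HomNN) : HomNN := ⟨fun n => f.1 n ⊓ g.1 n,
  fun _ _ h => inf_le_inf (f.2 h) (g.2 h)⟩

lemma basisBgen : IsTopologicalBasis Bgen := by
  refine ⟨?_, ?_, rfl⟩
  · rintro t₁ ⟨a₁, b₁, ha₁, hb₁, rfl⟩ t₂ ⟨a₂, b₂, ha₂, hb₂, rfl⟩ f ⟨⟨h1, h2⟩, ⟨h3, h4⟩⟩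
    refine ⟨{g : HomNN | supH a₁ a₂ ≤ g ∧ g ≤ infH b₁ b₂}, ⟨supH a₁ a₂, infH b₁ b₂, ?_, ?_, rfl⟩, ⟨?_, ?_⟩, ?_⟩
    · obtain ⟨N₁, hN₁⟩ := ha₁; obtain ⟨N₂, hN₂⟩ := ha₂
      exact ⟨max N₁ N₂, fun n => sup_le ((hN₁ n).trans (by exact_mod_cast le_max_left _ _))
        ((hN₂ n).trans (by exact_mod_cast le_max_right _ _))⟩
    · obtain ⟨n₁, hn₁⟩ := hb₁; obtain ⟨n₂, hn₂⟩ := hb₂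
      refine ⟨max n₁ n₂, ?_⟩
      show b₁.1 (max n₁ n₂) ⊓ b₂.1 (max n₁ n₂) = ⊤
      rw [large_mono b₁.2 hn₁ (le_max_left _ _), large_mono b₂.2 hn₂ (le_max_right _ _)]
      simp
    · exact fun n => sup_le (h1 n) (h3 n)
    · exact fun n => le_inf (h2 n) (h4 n)
    · rintro g ⟨hg1, hg2⟩
      exact ⟨⟨fun n => (le_sup_left.trans (hg1 n)), fun n => (hg2 n).trans inf_le_left⟩,
        ⟨fun n => (le_sup_right.trans (hg1 n)), fun n => (hg2 n).trans inf_le_right⟩⟩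
  · refine sUnion_eq_univ_iff.mpr fun f => ⟨{g : HomNN | botH ≤ g ∧ g ≤ topH},
      ⟨botH, topH, small_botH, large_topH, rfl⟩, ⟨fun n => ?_, fun n => le_top⟩⟩
    show (0:ℕ∞) ≤ f.1 n; exact zero_le

end
noncomputable section
open Set TopologicalSpace

lemma mem_closure_iff' {A : Set HomNN} {f : HomNN} :
    f ∈ closure A ↔ ∀ t ∈ Bgen, f ∈ t → (t ∩ A).Nonempty :=
  basisBgen.mem_closure_iff

/-- interior of an upper set is upper -/
lemma isUpperSet_interior {A : Set HomNN} (hA : IsUpperSet A) : IsUpperSet (interior A) := by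
  intro f f' hff' hf
  obtain ⟨t, htB, hft, htA⟩ := basisBgen.exists_subset_of_mem_open hf isOpen_interior
  obtain ⟨a, b, ha, hb, rfl⟩ := htB
  obtain ⟨haf, hfb⟩ := hft
  have hsub : {g : HomNN | a ≤ g ∧ g ≤ topH} ⊆ A := by
    rintro g ⟨hag, -⟩
    have hmem : infH g b ∈ A := interior_subset (htA ⟨fun n => le_inf (hag n) ((haf n).trans (hfb n)), fun n => inf_le_right⟩)
    exact hA (fun n => inf_le_left) hmem
  have hopen : IsOpen {g : HomNN | a ≤ g ∧ g ≤ topH} :=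
    basisBgen.isOpen ⟨a, topH, ha, large_topH, rfl⟩
  have : f' ∈ {g : HomNN | a ≤ g ∧ g ≤ topH} := ⟨fun n => (haf n).trans (hff' n), fun n => le_top⟩
  exact interior_maximal hsub hopen this

/-- crux: for upper sets, closures intersect into closure of intersection -/
lemma closure_inter_upper {F₁ F₂ : Set HomNN} (h₁ : IsUpperSet F₁) (h₂ : IsUpperSet F₂) :
    closure F₁ ∩ closure F₂ ⊆ closure (F₁ ∩ F₂) := by
  rintro f ⟨hf₁, hf₂⟩
  rw [mem_closure_iff'] at *
  rintro t ht hft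
  obtain ⟨h₁', h₂'⟩ := And.intro (hf₁ t ht hft) (hf₂ t ht hft)
  obtain ⟨a, b, ha, hb, rfl⟩ := ht
  obtain ⟨g₁, ⟨hag₁, hg₁b⟩, hg₁⟩ := h₁'
  obtain ⟨g₂, ⟨hag₂, hg₂b⟩, hg₂⟩ := h₂'
  refine ⟨supH g₁ g₂, ⟨⟨fun n => le_sup_of_le_left (hag₁ n), fun n => sup_le (hg₁b n) (hg₂b n)⟩, ?_, ?_⟩⟩
  · exact h₁ (fun n => le_sup_left) hg₁
  · exact h₂ (fun n => le_sup_right) hg₂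

lemma regular_union {ℐ₁ ℐ₂ : Set HomNN}
    (hl₁ : IsLowerSet ℐ₁) (hl₂ : IsLowerSet ℐ₂)
    (hr₁ : ℐ₁ = interior (closure ℐ₁)) (hr₂ : ℐ₂ = interior (closure ℐ₂))
    (ho₁ : IsOpen ℐ₁) (ho₂ : IsOpen ℐ₂) :
    ℐ₁ ∪ ℐ₂ = interior (closure (ℐ₁ ∪ ℐ₂)) := by
  have hopen : IsOpen (ℐ₁ ∪ ℐ₂) := ho₁.union ho₂
  apply Subset.antisymm
  · exact hopen.subset_interior_iff.mpr subset_closure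
  · intro x hx
    by_contra hxn
    rw [mem_union, not_or] at hxn
    obtain ⟨hx1, hx2⟩ := hxn
    set F₁ := interior ℐ₁ᶜ with hF₁
    set F₂ := interior ℐ₂ᶜ with hF₂
    have hup₁ : IsUpperSet F₁ := isUpperSet_interior hl₁.compl
    have hup₂ : IsUpperSet F₂ := isUpperSet_interior hl₂.compl
    have hc₁ : closure ℐ₁ = F₁ᶜ := by rw [hF₁, closure_eq_compl_interior_compl]
    have hc₂ : closure ℐ₂ = F₂ᶜ := by rw [hF₂, closure_eq_compl_interior_compl]
    have hI₁ : ℐ₁ = (closure F₁)ᶜ := by rw [hr₁, hc₁, interior_compl]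
    have hI₂ : ℐ₂ = (closure F₂)ᶜ := by rw [hr₂, hc₂, interior_compl]
    have hxc₁ : x ∈ closure F₁ := by by_contra h; exact hx1 (hI₁ ▸ h)
    have hxc₂ : x ∈ closure F₂ := by by_contra h; exact hx2 (hI₂ ▸ h)
    have hmem : x ∈ closure (F₁ ∩ F₂) := closure_inter_upper hup₁ hup₂ ⟨hxc₁, hxc₂⟩
    have : x ∈ interior ((F₁ ∩ F₂)ᶜ) := by
      rw [closure_union, hc₁, hc₂, ← compl_inter] at hx
      exact hx
    rw [interior_compl] at this
    exact this hmem

end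
noncomputable section
open Set TopologicalSpace

lemma Lmap_inj {f g : NNhat} (hf : Monotone f) (hg : Monotone g)
    (hsf : SmallMap f) (hsg : SmallMap g) (h : Lmap f = Lmap g) : f = g := by
  obtain ⟨N, hN⟩ := hsf; obtain ⟨M, hM⟩ := hsg
  have hfne : ∀ n, f n ≠ ⊤ := fun n h' => by simpa [h'] using (hN n).trans_lt (by exact_mod_cast WithTop.coe_lt_top N)
  have hgne : ∀ n, g n ≠ ⊤ := fun n h' => by simpa [h'] using (hM n).trans_lt (by exact_mod_cast WithTop.coe_lt_top M)
  have key : ∀ n, (f n).toNat = (g n).toNat := by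
    intro n
    induction n with
    | zero => have := congrFun h 0; simpa [Lmap] using this
    | succ k ih =>
      have h1 := congrFun h (k+1)
      simp only [Lmap] at h1
      have hfk : (f k).toNat ≤ (f (k+1)).toNat :=
        ENat.toNat_le_toNat (hf (Nat.le_succ k)) (hfne (k+1))
      have hgk : (g k).toNat ≤ (g (k+1)).toNat :=
        ENat.toNat_le_toNat (hg (Nat.le_succ k)) (hgne (k+1))
      omega
  funext n
  have := key n
  rw [← ENat.coe_toNat (hfne n), ← ENat.coe_toNat (hgne n), this]

lemma GammaIdeal_union (A B : Set HomNN) :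
    GammaIdeal (A ∪ B) = GammaIdeal A ∪ GammaIdeal B := by
  ext v
  constructor
  · rintro ⟨f, hf | hf, hL, rfl⟩
    · exact Or.inl ⟨f, hf, hL, rfl⟩
    · exact Or.inr ⟨f, hf, hL, rfl⟩
  · rintro (⟨f, hf, hL, rfl⟩ | ⟨f, hf, hL, rfl⟩)
    · exact ⟨f, Or.inl hf, hL, rfl⟩
    · exact ⟨f, Or.inr hf, hL, rfl⟩

lemma LambdaIdeal_inter (A B : Set HomNN) :
    LambdaIdeal (A ∩ B) = LambdaIdeal A ∩ LambdaIdeal B := by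
  ext v
  constructor
  · rintro ⟨f, ⟨hfA, hfB⟩, hS, rfl⟩
    exact ⟨⟨f, hfA, hS, rfl⟩, ⟨f, hfB, hS, rfl⟩⟩
  · rintro ⟨⟨f, hfA, hSf, rfl⟩, ⟨g, hgB, hSg, hvg⟩⟩
    have : f = g := Subtype.ext (Lmap_inj f.2 g.2 hSf hSg hvg)
    subst this
    exact ⟨f, ⟨hfA, hgB⟩, hSf, rfl⟩

/-- Part 1 of the theorem as a standalone lemma. -/
lemma dualPair_union {I₁ I₂ J₁ J₂ : Set (ℕ → ℕ)}
    (h₁ : IsDualPair I₁ J₁) (h₂ : IsDualPair I₂ J₂) :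
    IsDualPair (I₁ ∪ I₂) (J₁ ∩ J₂) := by
  obtain ⟨ℐ₁, ho₁, hl₁, hr₁, hG₁, hL₁⟩ := h₁
  obtain ⟨ℐ₂, ho₂, hl₂, hr₂, hG₂, hL₂⟩ := h₂
  refine ⟨ℐ₁ ∪ ℐ₂, ho₁.union ho₂, hl₁.union hl₂,
    regular_union hl₁ hl₂ hr₁ hr₂ ho₁ ho₂, ?_, ?_⟩
  · rw [GammaIdeal_union, hG₁, hG₂]
  · rw [compl_union, interior_inter, LambdaIdeal_inter, hL₁, hL₂]

end
noncomputable section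
open Set TopologicalSpace

def cumul (u : ℕ → ℕ) (j : ℕ) : ℕ := ∑ i ∈ Finset.range (j+1), u i
def cumul' (u : ℕ → ℕ) (j : ℕ) : ℕ := ∑ i ∈ Finset.range j, u i

lemma cumul'_succ (u : ℕ → ℕ) (j : ℕ) : cumul' u (j+1) = cumul u j := rfl

lemma cumul_succ_eq (u : ℕ → ℕ) (j : ℕ) : cumul u j = cumul' u j + u j :=
  Finset.sum_range_succ u j

lemma cumul'_mono (u : ℕ → ℕ) : Monotone (cumul' u) := fun a b h =>
  Finset.sum_le_sum_of_subset (Finset.range_subset_range.mpr h)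

lemma cumul_mono (u : ℕ → ℕ) : Monotone (cumul u) := fun a b h =>
  Finset.sum_le_sum_of_subset (Finset.range_subset_range.mpr (by omega))

def Fmap (u : ℕ → ℕ) : NNhat := fun i =>
  sInf ((fun j : ℕ => (j : ℕ∞)) '' {j : ℕ | i < cumul u j})

lemma Fmap_mono (u : ℕ → ℕ) : Monotone (Fmap u) := by
  intro a b hab
  apply sInf_le_sInf
  rintro x ⟨j, hj, rfl⟩
  exact ⟨j, lt_of_le_of_lt hab hj, rfl⟩

lemma Fmap_top {u : ℕ → ℕ} {i : ℕ} (h : ∀ j, cumul u j ≤ i) : Fmap u i = ⊤ := by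
  have : {j : ℕ | i < cumul u j} = ∅ := by
    ext j; simp only [mem_setOf_eq, mem_empty_iff_false, iff_false, not_lt]; exact h j
  rw [Fmap, this]; simp

lemma Fmap_eq_coe_iff {u : ℕ → ℕ} {i j : ℕ} :
    Fmap u i = (j : ℕ∞) ↔ (cumul' u j ≤ i ∧ i < cumul u j) := by
  constructor
  · intro h
    by_cases hne : {j' : ℕ | i < cumul u j'}.Nonempty
    · have hmem : i < cumul u (sInf {j' : ℕ | i < cumul u j'}) := Nat.sInf_mem hne
      have hFm : Fmap u i = ((sInf {j' : ℕ | i < cumul u j'} : ℕ) : ℕ∞) := by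
        apply le_antisymm
        · exact sInf_le ⟨_, hmem, rfl⟩
        · apply le_sInf
          rintro x ⟨j', hj', rfl⟩
          show ((sInf {j' : ℕ | i < cumul u j'} : ℕ) : ℕ∞) ≤ (j' : ℕ∞)
          exact_mod_cast Nat.sInf_le hj'
      rw [h] at hFm
      have hjm : j = sInf {j' : ℕ | i < cumul u j'} := by exact_mod_cast hFm
      rw [← hjm] at hmem
      refine ⟨?_, hmem⟩
      rcases Nat.eq_zero_or_pos j with h0 | hpos
      · simp [h0, cumul']
      · have hnm : j - 1 ∉ {j' : ℕ | i < cumul u j'} :=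
          Nat.notMem_of_lt_sInf (by omega)
        simp only [mem_setOf_eq, not_lt] at hnm
        have h2 : cumul' u j ≤ cumul u (j-1) := by
          rw [cumul']
          apply Finset.sum_le_sum_of_subset (Finset.range_subset_range.mpr (by omega))
        omega
    · rw [not_nonempty_iff_eq_empty] at hne
      rw [Fmap, hne] at h
      simp at h
  · rintro ⟨h1, h2⟩
    apply le_antisymm
    · exact sInf_le ⟨j, h2, rfl⟩
    · apply le_sInf
      rintro x ⟨j', hj', rfl⟩
      simp only [mem_setOf_eq] at hj'
      show (j : ℕ∞) ≤ (j' : ℕ∞)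
      by_contra hlt
      push_neg at hlt
      have hj'j : j' < j := by exact_mod_cast hlt
      have h3 : cumul u j' ≤ cumul' u j := by
        rw [← cumul'_succ]
        exact cumul'_mono u (by omega)
      omega

lemma Fmap_large {u : ℕ → ℕ} {B : ℕ} (hB : ∀ i, B ≤ i → u i = 0) :
    LargeMap (Fmap u) := by
  refine ⟨cumul u B, Fmap_top fun j => ?_⟩
  rcases le_or_gt j B with h | h
  · exact cumul_mono u h
  · have : cumul u j = cumul u B := by
      rw [cumul, cumul]
      symm
      apply Finset.sum_subset (Finset.range_subset_range.mpr (by omega))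
      intro x _ hx
      exact hB x (by simp at hx; omega)
    omega

lemma Fmap_le_Fmap {u v : ℕ → ℕ} (h : ∀ j, cumul u j ≤ cumul v j) :
    ∀ i, Fmap v i ≤ Fmap u i := by
  intro i
  apply sInf_le_sInf
  rintro x ⟨j, hj, rfl⟩
  exact ⟨j, lt_of_lt_of_le hj (h j), rfl⟩

end
noncomputable section
open Set TopologicalSpace

/-- counting: `Gmap f l` as a finset card, given a threshold `m` past which `f = ⊤`. -/
lemma Gmap_card {f : NNhat} {m : ℕ} (hm : ∀ i, m ≤ i → f i = ⊤) (l : ℕ) :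
    Gmap f l = ((Finset.range m).filter (fun i => f i = (l : ℕ∞))).card := by
  have hset : {i : ℕ | f i = (l : ℕ∞)} =
      ↑((Finset.range m).filter (fun i => f i = (l : ℕ∞))) := by
    ext i
    simp only [mem_setOf_eq, Finset.coe_filter, Finset.mem_range, mem_setOf_eq]
    constructor
    · intro h
      refine ⟨?_, h⟩
      by_contra hi
      push_neg at hi
      rw [hm i hi] at h
      exact (ENat.top_ne_coe l) h
    · exact fun h => h.2
  rw [Gmap]
  rw [show {i : ℕ // f i = (l : ℕ∞)} = ↥{i : ℕ | f i = (l : ℕ∞)} from rfl]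
  rw [Nat.card_coe_set_eq, hset, Set.ncard_coe_finset]

lemma cumul_Gmap {f : NNhat} {m : ℕ} (hm : ∀ i, m ≤ i → f i = ⊤) (j : ℕ) :
    cumul (Gmap f) j = ((Finset.range m).filter (fun i => f i ≤ (j : ℕ∞))).card := by
  have : cumul (Gmap f) j =
      ∑ l ∈ Finset.range (j+1), ((Finset.range m).filter (fun i => f i = (l : ℕ∞))).card := by
    rw [cumul]
    exact Finset.sum_congr rfl fun l _ => Gmap_card hm l
  rw [this, ← Finset.card_biUnion]
  · congr 1
    ext i
    simp only [Finset.mem_biUnion, Finset.mem_filter, Finset.mem_range]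
    constructor
    · rintro ⟨l, hl, him, hfi⟩
      exact ⟨him, le_trans (le_of_eq hfi) (by exact_mod_cast Nat.lt_succ_iff.mp hl)⟩
    · rintro ⟨him, hle⟩
      have hne : f i ≠ ⊤ := fun h => by rw [h] at hle; exact absurd (top_le_iff.mp hle) (by simp)
      refine ⟨(f i).toNat, ?_, him, (ENat.coe_toNat hne).symm⟩
      rw [Nat.lt_succ_iff]
      have := ENat.coe_toNat hne
      rw [← this] at hle
      exact_mod_cast hle
  · intro l₁ _ l₂ _ hne
    refine Finset.disjoint_left.mpr ?_
    intro i hi₁ hi₂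
    simp only [Finset.mem_filter] at hi₁ hi₂
    exact absurd (by exact_mod_cast hi₁.2.symm.trans hi₂.2 : l₁ = l₂) hne

end
noncomputable section
open Set TopologicalSpace

lemma cumul_le_deg {u : ℕ → ℕ} {B : ℕ} (hB : ∀ i, B ≤ i → u i = 0) (j : ℕ) :
    cumul u j ≤ cumul u B := by
  rcases le_or_gt j B with h | h
  · exact cumul_mono u h
  · have : cumul u j = cumul u B := by
      rw [cumul, cumul]
      symm
      apply Finset.sum_subset (Finset.range_subset_range.mpr (by omega))
      intro x _ hx
      exact hB x (by simp at hx; omega)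
    omega

lemma Fmap_thresh {u : ℕ → ℕ} {B : ℕ} (hB : ∀ i, B ≤ i → u i = 0) :
    ∀ i, cumul u B ≤ i → Fmap u i = ⊤ := by
  intro i hi
  exact Fmap_top fun j => le_trans (cumul_le_deg hB j) hi

lemma Gmap_Fmap {u : ℕ → ℕ} {B : ℕ} (hB : ∀ i, B ≤ i → u i = 0) :
    Gmap (Fmap u) = u := by
  funext l
  rw [Gmap_card (Fmap_thresh hB) l]
  have : (Finset.range (cumul u B)).filter (fun i => Fmap u i = (l : ℕ∞)) =
      Finset.Ico (cumul' u l) (cumul u l) := by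
    ext i
    simp only [Finset.mem_filter, Finset.mem_range, Finset.mem_Ico, Fmap_eq_coe_iff]
    constructor
    · rintro ⟨-, h1, h2⟩; exact ⟨h1, h2⟩
    · rintro ⟨h1, h2⟩
      exact ⟨lt_of_lt_of_le h2 (cumul_le_deg hB l), h1, h2⟩
  rw [this, Nat.card_Ico, cumul_succ_eq]
  omega

lemma cumul_Gmap_ge {u : ℕ → ℕ} {B : ℕ} (hB : ∀ i, B ≤ i → u i = 0)
    {f : NNhat} (hfm : Monotone f) (hlf : LargeMap f)
    (hle : ∀ i, f i ≤ Fmap u i) (j : ℕ) :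
    cumul u j ≤ cumul (Gmap f) j := by
  obtain ⟨m₁, hm₁⟩ := hlf
  set m := max m₁ (cumul u B) with hm
  have hft : ∀ i, m ≤ i → f i = ⊤ := fun i hi =>
    large_mono hfm hm₁ (le_trans (le_max_left _ _) hi)
  have hFt : ∀ i, m ≤ i → Fmap u i = ⊤ := fun i hi =>
    Fmap_thresh hB i (le_trans (le_max_right _ _) hi)
  rw [cumul_Gmap hft j]
  conv_lhs => rw [← Gmap_Fmap hB]
  rw [cumul_Gmap hFt j]
  apply Finset.card_le_card
  intro i hi
  simp only [Finset.mem_filter] at *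
  exact ⟨hi.1, le_trans (hle i) hi.2⟩

lemma Gmap_support_finite {f : NNhat} {m : ℕ} (hm : ∀ i, m ≤ i → f i = ⊤) :
    (Function.support (Gmap f)).Finite := by
  apply Set.Finite.subset (Set.finite_range (fun i : Fin m => (f i).toNat))
  intro l hl
  rw [Function.mem_support, Gmap_card hm l] at hl
  obtain ⟨i, hi⟩ := Finset.card_pos.mp (Nat.pos_of_ne_zero hl)
  simp only [Finset.mem_filter, Finset.mem_range] at hi
  exact ⟨⟨i, hi.1⟩, by simp [hi.2]⟩

lemma exists_bound {v : ℕ → ℕ} (h : (Function.support v).Finite) :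
    ∃ B, ∀ i, B ≤ i → v i = 0 := by
  refine ⟨h.toFinset.sup id + 1, fun i hi => ?_⟩
  by_contra hv
  have : i ∈ h.toFinset := by simp [Function.mem_support, hv]
  have := Finset.le_sup (f := id) this
  simp at this
  omega

end
noncomputable section
open Set TopologicalSpace

lemma cumul_add (a b : ℕ → ℕ) (j : ℕ) : cumul (a + b) j = cumul a j + cumul b j := by
  simp [cumul, Finset.sum_add_distrib]

lemma cumul_xvar (i j : ℕ) : cumul (xvar i) j = if i ≤ j then 1 else 0 := by
  rw [cumul]
  simp only [xvar]
  rw [Finset.sum_ite_eq' (Finset.range (j+1)) i (fun _ => 1)]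
  simp [Nat.lt_succ_iff]

lemma stStep_cumul {a c : ℕ → ℕ} (h : stStep a c) (j : ℕ) : cumul c j ≤ cumul a j := by
  rcases h with ⟨i, j', w, hij, rfl, rfl⟩ | ⟨i, rfl⟩
  · rw [cumul_add, cumul_add, cumul_xvar, cumul_xvar]
    have : (if j' ≤ j then 1 else 0) ≤ (if i ≤ j then 1 else 0) := by
      split_ifs <;> omega
    omega
  · rw [cumul_add]
    exact Nat.le_add_right _ _

lemma stStep_support {a c : ℕ → ℕ} (h : stStep a c)
    (hc : (Function.support c).Finite) : (Function.support a).Finite := by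
  rcases h with ⟨i, j', w, hij, rfl, rfl⟩ | ⟨i, rfl⟩
  · apply Set.Finite.subset (hc.union (Set.finite_singleton i))
    intro k hk
    simp only [Function.mem_support, Pi.add_apply] at hk ⊢
    by_cases hki : k = i
    · exact Or.inr hki
    · left
      simp only [Set.mem_union, Function.mem_support, Pi.add_apply]
      simp only [xvar, if_neg hki, add_zero] at hk
      omega
  · apply Set.Finite.subset (hc.union (Set.finite_singleton i))
    intro k hk
    simp only [Function.mem_support, Pi.add_apply] at hk
    by_cases hki : k = i
    · exact Or.inr hki
    · left
      simp only [Function.mem_support]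
      simp only [xvar, if_neg hki, add_zero] at hk
      exact hk

lemma stGE_dom {u v : ℕ → ℕ} (h : stGE v u) :
    (∀ j, cumul u j ≤ cumul v j) ∧ ((Function.support u).Finite → (Function.support v).Finite) := by
  induction h using Relation.ReflTransGen.head_induction_on with
  | refl => exact ⟨fun _ => le_rfl, id⟩
  | head h' _ ih =>
      exact ⟨fun j => (ih.1 j).trans (stStep_cumul h' j), fun hu => stStep_support h' (ih.2 hu)⟩

end
noncomputable section
open Set TopologicalSpace

lemma dom_to_stGE_aux (u : ℕ → ℕ) :
    ∀ N B v, (∀ i, B ≤ i → v i = 0) → (∀ i, B ≤ i → u i = 0) →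
    (∀ j, cumul u j ≤ cumul v j) →
    (∑ j ∈ Finset.range (B+1), (cumul v j - cumul u j)) ≤ N → stGE v u := by
  intro N
  induction N with
  | zero =>
    intro B v hvB huB hdom hsum
    have hcum : ∀ j, j ≤ B → cumul v j = cumul u j := by
      intro j hj
      have h0 := Finset.sum_eq_zero_iff.mp (Nat.le_zero.mp hsum) j (Finset.mem_range.mpr (by omega))
      have := hdom j
      omega
    have hvu : v = u := by
      funext k
      rcases le_or_gt B k with h | h
      · rw [hvB k h, huB k h]
      · cases k with
        | zero =>
          have h0 := hcum 0 (by omega)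
          simpa [cumul] using h0
        | succ k' =>
          have h1 := hcum (k'+1) (by omega)
          have h2 := hcum k' (by omega)
          rw [cumul_succ_eq, cumul_succ_eq, cumul'_succ, cumul'_succ] at h1
          omega
    rw [hvu]
    exact Relation.ReflTransGen.refl
  | succ N ih =>
    intro B v hvB huB hdom hsum
    by_cases hvu : v = u
    · rw [hvu]; exact Relation.ReflTransGen.refl
    rcases lt_or_eq_of_le (hdom B) with hdeg | hdeg
    · -- degree drop case
      have hex : ∃ k, k ≤ B ∧ v k ≠ 0 := by
        by_contra hall
        push_neg at hall
        have : cumul v B = 0 := Finset.sum_eq_zero (fun k hk => hall k (by simp at hk; omega))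
        omega
      obtain ⟨k₀, hk₀B, hk₀⟩ := hex
      have hvi : v (Nat.findGreatest (fun k => v k ≠ 0) B) ≠ 0 :=
        Nat.findGreatest_spec (P := fun k => v k ≠ 0) hk₀B hk₀
      set i := Nat.findGreatest (fun k => v k ≠ 0) B with hidef
      have hiB : i ≤ B := Nat.findGreatest_le B
      have hiB' : i < B := by
        rcases lt_or_eq_of_le hiB with h | h
        · exact h
        · exact absurd (h ▸ hvB B le_rfl) hvi
      have habove : ∀ k, i < k → v k = 0 := by
        intro k hk
        rcases le_or_gt k B with hkB | hkB
        · by_contra hne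
          exact Nat.findGreatest_is_greatest hk hkB hne
        · exact hvB k (by omega)
      have hveq : v = (fun k => if k = i then v i - 1 else v k) + xvar i := by
        funext k
        simp only [Pi.add_apply, xvar]
        by_cases hk : k = i
        · subst hk; simp; omega
        · simp [hk]
      have hstep : stStep v (fun k => if k = i then v i - 1 else v k) := Or.inr ⟨i, hveq⟩
      set v' := (fun k => if k = i then v i - 1 else v k) with hv'def
      have hv'B : ∀ k, B ≤ k → v' k = 0 := by
        intro k hk
        simp only [hv'def]
        rw [if_neg (by omega)]
        exact hvB k hk
      have hcv : ∀ j, cumul v j = cumul v' j + (if i ≤ j then 1 else 0) := by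
        intro j
        conv_lhs => rw [hveq]
        rw [cumul_add, cumul_xvar]
      have hstab : ∀ j, i ≤ j → cumul v j = cumul v B := by
        have h1 : ∀ m, i ≤ m → cumul v m = cumul v i := by
          intro m hm
          rw [cumul, cumul]
          symm
          apply Finset.sum_subset (Finset.range_subset_range.mpr (by omega))
          intro x hx hnx
          exact habove x (by simp at hx hnx; omega)
        intro j hj
        rw [h1 j hj, h1 B hiB]
      have hdom' : ∀ j, cumul u j ≤ cumul v' j := by
        intro j
        rcases le_or_gt i j with hij | hij
        · have hj := hcv j
          rw [if_pos hij] at hj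
          have h2 := hstab j hij
          have h3 := cumul_le_deg huB j
          omega
        · have hj := hcv j
          rw [if_neg (by omega)] at hj
          have := hdom j
          omega
      have hmeas : (∑ j ∈ Finset.range (B+1), (cumul v' j - cumul u j)) ≤ N := by
        rw [Finset.sum_range_succ] at hsum ⊢
        have hle : (∑ j ∈ Finset.range B, (cumul v' j - cumul u j)) ≤
            (∑ j ∈ Finset.range B, (cumul v j - cumul u j)) := by
          apply Finset.sum_le_sum
          intro j _
          have hj := hcv j
          have : cumul v' j ≤ cumul v j := by split_ifs at hj <;> omega
          omega
        have hB' := hcv B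
        rw [if_pos hiB] at hB'
        omega
      exact Relation.ReflTransGen.head hstep (ih B v' hv'B huB hdom' hmeas)
    · -- shift case
      have hex : ∃ k, v k ≠ u k := by
        by_contra hall
        push_neg at hall
        exact hvu (funext hall)
      set i := Nat.find hex with hidef
      have hvine : v i ≠ u i := Nat.find_spec hex
      have hbelow : ∀ k, k < i → v k = u k := fun k hk => not_not.mp (Nat.find_min hex hk)
      have hiB : i < B := by
        by_contra hge
        push_neg at hge
        exact hvine (by rw [hvB i hge, huB i hge])
      have hc' : cumul' v i = cumul' u i :=
        Finset.sum_congr rfl (fun k hk => hbelow k (Finset.mem_range.mp hk))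
      have hvi_gt : u i < v i := by
        have hd := hdom i
        rw [cumul_succ_eq, cumul_succ_eq, hc'] at hd
        omega
      have hveq : v = (fun k => if k = i then v i - 1 else v k) + xvar i := by
        funext k
        simp only [Pi.add_apply, xvar]
        by_cases hk : k = i
        · subst hk; simp; omega
        · simp [hk]
      set w := (fun k => if k = i then v i - 1 else v k) with hwdef
      set v' := w + xvar (i+1) with hv'def
      have hstep : stStep v v' := Or.inl ⟨i, i+1, w, by omega, hveq, rfl⟩
      have hcv : ∀ j, cumul v j = cumul w j + (if i ≤ j then 1 else 0) := by
        intro j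
        conv_lhs => rw [hveq]
        rw [cumul_add, cumul_xvar]
      have hcv' : ∀ j, cumul v' j = cumul w j + (if i+1 ≤ j then 1 else 0) := by
        intro j
        rw [hv'def, cumul_add, cumul_xvar]
      have heq_ne : ∀ j, j ≠ i → cumul v' j = cumul v j := by
        intro j hj
        have h1 := hcv j
        have h2 := hcv' j
        rcases lt_or_gt_of_ne hj with h | h
        · rw [if_neg (by omega)] at h1
          rw [if_neg (by omega)] at h2
          omega
        · rw [if_pos (by omega)] at h1
          rw [if_pos (by omega)] at h2
          omega
      have hat_i : cumul v' i + 1 = cumul v i := by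
        have h1 := hcv i
        rw [if_pos le_rfl] at h1
        have h2 := hcv' i
        rw [if_neg (by omega)] at h2
        omega
      have hat_i_ge : cumul u i + 1 ≤ cumul v i := by
        have e1 := cumul_succ_eq u i
        have e2 := cumul_succ_eq v i
        omega
      have hdom' : ∀ j, cumul u j ≤ cumul v' j := by
        intro j
        by_cases hj : j = i
        · subst hj
          omega
        · rw [heq_ne j hj]
          exact hdom j
      have hv'B : ∀ k, B+1 ≤ k → v' k = 0 := by
        intro k hk
        have hki : k ≠ i := by omega
        have hki1 : k ≠ i+1 := by omega
        show w k + xvar (i+1) k = 0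
        simp only [hwdef, xvar, if_neg hki, if_neg hki1, add_zero]
        exact hvB k (by omega)
      have huB' : ∀ k, B+1 ≤ k → u k = 0 := fun k hk => huB k (by omega)
      have hmem : i ∈ Finset.range (B+2) := by simp; omega
      have hdiffeq : ∑ j ∈ (Finset.range (B+2)).erase i, (cumul v' j - cumul u j) =
          ∑ j ∈ (Finset.range (B+2)).erase i, (cumul v j - cumul u j) :=
        Finset.sum_congr rfl (fun j hj => by rw [heq_ne j (Finset.ne_of_mem_erase hj)])
      have hsplit : ∀ x : ℕ → ℕ,
          (∑ j ∈ (Finset.range (B+2)).erase i, (cumul x j - cumul u j)) + (cumul x i - cumul u i)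
            = ∑ j ∈ Finset.range (B+2), (cumul x j - cumul u j) := fun x =>
        Finset.sum_erase_add _ _ hmem
      have hext : cumul v (B+1) = cumul v B ∧ cumul u (B+1) = cumul u B := by
        constructor
        · have e := cumul_succ_eq v (B+1)
          rw [cumul'_succ] at e
          rw [e, hvB (B+1) (by omega), add_zero]
        · have e := cumul_succ_eq u (B+1)
          rw [cumul'_succ] at e
          rw [e, huB (B+1) (by omega), add_zero]
      have hold2 : (∑ j ∈ Finset.range (B+2), (cumul v j - cumul u j)) =
          (∑ j ∈ Finset.range (B+1), (cumul v j - cumul u j)) := by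
        rw [show B+2 = (B+1)+1 from rfl, Finset.sum_range_succ]
        have hterm : cumul v (B+1) - cumul u (B+1) = 0 := by omega
        rw [hterm, add_zero]
      have hmeas : (∑ j ∈ Finset.range (B+1+1), (cumul v' j - cumul u j)) ≤ N := by
        have h1 := hsplit v'
        have h2 := hsplit v
        rw [hdiffeq] at h1
        rw [show B+1+1 = B+2 from rfl]
        omega
      exact Relation.ReflTransGen.head hstep (ih (B+1) v' hv'B huB' hdom' hmeas)

lemma dom_to_stGE {u v : ℕ → ℕ} (hu : (Function.support u).Finite)
    (hv : (Function.support v).Finite) (hdom : ∀ j, cumul u j ≤ cumul v j) :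
    stGE v u := by
  obtain ⟨Bu, hBu⟩ := exists_bound hu
  obtain ⟨Bv, hBv⟩ := exists_bound hv
  exact dom_to_stGE_aux u _ (max Bu Bv) v
    (fun i hi => hBv i (le_trans (le_max_right _ _) hi))
    (fun i hi => hBu i (le_trans (le_max_left _ _) hi))
    hdom le_rfl

end
noncomputable section
open Set TopologicalSpace

lemma principal_dualizable {u : ℕ → ℕ} (hu : u ∈ Mon) :
    ∃ J, IsDualPair (sstSpan {u}) J := by
  obtain ⟨B, hB⟩ := exists_bound hu
  set b : HomNN := ⟨Fmap u, Fmap_mono u⟩ with hbdef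
  set ℐ : Set HomNN := {f | botH ≤ f ∧ f ≤ b} with hIdef
  have hopen : IsOpen ℐ := basisBgen.isOpen ⟨botH, b, small_botH, Fmap_large hB, rfl⟩
  have hlower : IsLowerSet ℐ := by
    intro f g hgf hf
    exact ⟨fun n => zero_le, le_trans hgf hf.2⟩
  have hclosed : IsClosed ℐ := by
    rw [← isOpen_compl_iff]
    apply basisBgen.isOpen_iff.mpr
    intro f hf
    have hnb : ¬ f ≤ b := fun h => hf ⟨fun n => zero_le, h⟩
    rw [homNN_le_iff] at hnb
    push_neg at hnb
    obtain ⟨i, hi⟩ := hnb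
    have hi' : Fmap u i < f.1 i := hi
    have hctop : Fmap u i ≠ ⊤ := ne_top_of_lt (lt_of_lt_of_le hi' le_top)
    set n : ℕ := (Fmap u i).toNat with hndef
    have hcn : Fmap u i = (n : ℕ∞) := (ENat.coe_toNat hctop).symm
    have hfn1 : ((n+1 : ℕ) : ℕ∞) ≤ f.1 i := by
      rw [hcn] at hi'
      push_cast
      exact ENat.add_one_le_iff (by simp) |>.mpr hi'
    set a : HomNN := ⟨fun k => f.1 k ⊓ ((n+1 : ℕ) : ℕ∞),
      fun x y h => inf_le_inf (f.2 h) le_rfl⟩ with hadef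
    refine ⟨{g | a ≤ g ∧ g ≤ topH}, ⟨a, topH, ⟨n+1, fun k => min_le_right _ _⟩, large_topH, rfl⟩,
      ⟨fun k => min_le_left _ _, fun k => le_top⟩, ?_⟩
    rintro g ⟨hag, -⟩ ⟨-, hgb⟩
    have h1 : ((n+1 : ℕ) : ℕ∞) ≤ g.1 i := by
      have := hag i
      simp only [hadef] at this
      rw [inf_eq_right.mpr hfn1] at this
      exact this
    have h2 : g.1 i ≤ (n : ℕ∞) := le_of_le_of_eq (hgb i) hcn
    have : ((n+1 : ℕ) : ℕ∞) ≤ (n : ℕ∞) := le_trans h1 h2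
    have : n + 1 ≤ n := by exact_mod_cast this
    omega
  have hreg : ℐ = interior (closure ℐ) := by
    rw [hclosed.closure_eq, hopen.interior_eq]
  have hGamma : GammaIdeal ℐ = sstSpan {u} := by
    ext v
    constructor
    · rintro ⟨f, ⟨-, hfb⟩, hL, rfl⟩
      obtain ⟨m, hm⟩ := hL
      have hft : ∀ i, m ≤ i → f.1 i = ⊤ := fun i hi => large_mono f.2 hm hi
      refine ⟨u, mem_singleton u, dom_to_stGE hu (Gmap_support_finite hft) ?_⟩
      exact fun j => cumul_Gmap_ge hB f.2 ⟨m, hm⟩ (fun i => hfb i) j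
    · rintro ⟨u', hu', hst⟩
      rw [mem_singleton_iff] at hu'
      subst hu'
      obtain ⟨hdom, hsupp⟩ := stGE_dom hst
      obtain ⟨Bv, hBv⟩ := exists_bound (hsupp hu)
      refine ⟨⟨Fmap v, Fmap_mono v⟩, ⟨fun n => zero_le, fun i => Fmap_le_Fmap hdom i⟩,
        Fmap_large hBv, (Gmap_Fmap hBv).symm⟩
  exact ⟨LambdaIdeal (interior ℐᶜ), ℐ, hopen, hlower, hreg, hGamma, rfl⟩

lemma span_dualizable {M : Set (ℕ → ℕ)} (hfin : M.Finite) (hmon : M ⊆ Mon) :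
    ∃ J, IsDualPair (sstSpan M) J := by
  revert hmon
  refine Set.Finite.induction_on
    (motive := fun M _ => M ⊆ Mon → ∃ J, IsDualPair (sstSpan M) J) M hfin (fun _ => ?_) ?_
  ·
    refine ⟨LambdaIdeal (interior (∅ᶜ : Set HomNN)), (∅ : Set HomNN), isOpen_empty,
      fun a b _ h => absurd h (notMem_empty a), by rw [closure_empty, interior_empty], ?_, rfl⟩
    have h1 : GammaIdeal (∅ : Set HomNN) = ∅ := by
      ext v; simp [GammaIdeal]
    have h2 : sstSpan (∅ : Set (ℕ → ℕ)) = ∅ := by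
      ext v; simp [sstSpan]
    rw [h1, h2]
  · intro a s ha hsfin ih hmon
    have hins : sstSpan (insert a s) = sstSpan {a} ∪ sstSpan s := by
      ext v
      constructor
      · rintro ⟨u', hu', h⟩
        rcases hu' with rfl | hu'
        · exact Or.inl ⟨u', mem_singleton _, h⟩
        · exact Or.inr ⟨u', hu', h⟩
      · rintro (⟨u', hu', h⟩ | ⟨u', hu', h⟩)
        · rw [mem_singleton_iff] at hu'
          exact ⟨a, mem_insert _ _, hu' ▸ h⟩
        · exact ⟨u', mem_insert_of_mem _ hu', h⟩
    obtain ⟨J₁, h₁⟩ := principal_dualizable (hmon (mem_insert _ _))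
    obtain ⟨J₂, h₂⟩ := ih (fun x hx => hmon (mem_insert_of_mem _ hx))
    rw [hins]
    exact ⟨J₁ ∩ J₂, dualPair_union h₁ h₂⟩

end

noncomputable section

/-- if `I₁, I₂` are dualizable strongly stable ideals with duals
`J₁, J₂`, then `I₁ + I₂` (with monomial set `I₁ ∪ I₂`) is dualizable with dual
`J₁ ∩ J₂`; in particular `I₁ + I₂` is dualizable whenever `I₁` is dualizable and
`I₂` is a finitely generated strongly stable ideal. -/
theorem stmt10 :
    (∀ I₁ I₂ J₁ J₂ : Set (ℕ → ℕ), IsDualPair I₁ J₁ → IsDualPair I₂ J₂ →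
      IsDualPair (I₁ ∪ I₂) (J₁ ∩ J₂)) ∧
    (∀ I₁ I₂ : Set (ℕ → ℕ), (∃ J₁, IsDualPair I₁ J₁) →
      (∃ M : Set (ℕ → ℕ), M.Finite ∧ M ⊆ Mon ∧ I₂ = sstSpan M) →
      ∃ J, IsDualPair (I₁ ∪ I₂) J) := by
  constructor
  · intro I₁ I₂ J₁ J₂ h₁ h₂
    exact dualPair_union h₁ h₂
  · rintro I₁ I₂ ⟨J₁, h₁⟩ ⟨M, hMfin, hMmon, rfl⟩
    obtain ⟨J₂, h₂⟩ := span_dualizable hMfin hMmon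
    exact ⟨J₁ ∩ J₂, dualPair_union h₁ h₂⟩

end
end

section
/- Let A_1, …, A_r be finite weakly increasing sequences of positive integers, A_j = (a_{j,1} ≤ … ≤ a_{j,m_j}), with associated monomials y_{A_j} = x_{a_{j,1}}⋯x_{a_{j,m_j}} and x^{A_j} the list x_1^{a_{j,1}}, …, x_{m_j}^{a_{j,m_j}}. Then the strongly stable ideal ⟨y_{A_1}, …, y_{A_r}⟩ is dualizable, and its dual is the intersection ⟨x^{A_1}⟩ ∩ ⟨x^{A_2}⟩ ∩ … ∩ ⟨x^{A_r}⟩, where ⟨x^{A_j}⟩ = ⟨x_1^{a_{j,1}}, …, x_{m_j}^{a_{j,m_j}}⟩. -/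
noncomputable section

section Core

open Finset

/-- Partial sums of an exponent vector. -/
def S (u : ℕ → ℕ) (k : ℕ) : ℕ := ∑ t ∈ Finset.range k, u t

lemma S_succ (u : ℕ → ℕ) (k : ℕ) : S u (k+1) = S u k + u k := by
  simp [S, Finset.sum_range_succ]

lemma S_mono (u : ℕ → ℕ) : Monotone (S u) := fun a b h => by
  simpa [S] using Finset.sum_le_sum_of_subset (Finset.range_subset_range.2 h)

lemma S_add (u v : ℕ → ℕ) (k : ℕ) : S (u + v) k = S u k + S v k := by
  simp [S, Finset.sum_add_distrib]

lemma S_xvar (i k : ℕ) : S (xvar i) k = if i < k then 1 else 0 := by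
  unfold S xvar
  split <;> rename_i h
  · rw [Finset.sum_eq_single i] <;> simp_all
  · apply Finset.sum_eq_zero; intro x hx; simp only [Finset.mem_range] at hx
    simp only [ite_eq_right_iff]; omega

/-- Dominance of partial sums. -/
def dom (u v : ℕ → ℕ) : Prop := ∀ k, S v k ≤ S u k

lemma stStep_add {a b : ℕ → ℕ} (c : ℕ → ℕ) (h : stStep a b) : stStep (a + c) (b + c) := by
  rcases h with ⟨i, j, w, hij, ha, hb⟩ | ⟨i, ha⟩
  · exact Or.inl ⟨i, j, w + c, hij, by rw [ha]; ring, by rw [hb]; ring⟩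
  · exact Or.inr ⟨i, by rw [ha]; ring⟩

lemma stGE_add {a b : ℕ → ℕ} (c : ℕ → ℕ) (h : stGE a b) : stGE (a + c) (b + c) :=
  Relation.ReflTransGen.lift (· + c) (fun _ _ h => stStep_add c h) _ _ h

lemma stStep_dom {a b : ℕ → ℕ} (h : stStep a b) : dom a b := by
  rcases h with ⟨i, j, w, hij, ha, hb⟩ | ⟨i, ha⟩ <;> intro k
  · subst ha hb
    simp only [S_add, S_xvar]
    have : (if j < k then 1 else 0) ≤ (if i < k then 1 else 0) := by
      split <;> split <;> omega
    omega
  · subst ha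
    simp only [S_add, S_xvar]
    omega

lemma stGE_dom_s11 {u v : ℕ → ℕ} (h : stGE u v) : dom u v := by
  induction h with
  | refl => intro k; exact le_refl _
  | tail _ hstep ih => intro k; exact (stStep_dom hstep k).trans (ih k)

lemma support_add_xvar (w : ℕ → ℕ) (i : ℕ) :
    Function.support (w + xvar i) ⊆ Function.support w ∪ {i} := by
  intro x hx
  by_cases hxi : x = i
  · exact Or.inr hxi
  · left; simp only [Function.mem_support, Pi.add_apply, xvar, if_neg hxi, add_zero] at hx ⊢
    exact hx

lemma support_le_add_xvar (w : ℕ → ℕ) (i : ℕ) :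
    Function.support w ⊆ Function.support (w + xvar i) := by
  intro x hx
  simp only [Function.mem_support, Pi.add_apply] at hx ⊢
  omega

lemma stStep_mon {a b : ℕ → ℕ} (h : stStep a b) (hb : b ∈ Mon) : a ∈ Mon := by
  rcases h with ⟨i, j, w, _, ha, hbe⟩ | ⟨i, ha⟩
  · subst ha hbe
    exact ((hb.subset (support_le_add_xvar w j)).union (Set.finite_singleton i)).subset
      (support_add_xvar w i)
  · subst ha
    exact (hb.union (Set.finite_singleton i)).subset (support_add_xvar b i)

lemma stGE_mon {u v : ℕ → ℕ} (h : stGE u v) (hv : v ∈ Mon) : u ∈ Mon := by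
  induction h with
  | refl => exact hv
  | tail _ hstep ih => exact ih (stStep_mon hstep hv)

end Core
section Core2

lemma stGE_zero_aux (N : ℕ) : ∀ d u, (∀ k, N ≤ k → u k = 0) → S u N ≤ d → stGE u 0 := by
  intro d
  induction d with
  | zero =>
    intro u hN hS
    have : u = 0 := by
      funext k
      by_cases hk : k < N
      · have := Finset.sum_eq_zero_iff.1 (Nat.le_zero.1 hS) k (Finset.mem_range.2 hk)
        exact this
      · exact hN k (by omega)
    rw [this]
    exact Relation.ReflTransGen.refl
  | succ d ih =>
    intro u hN hS
    by_cases h0 : u = 0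
    · rw [h0]
      exact Relation.ReflTransGen.refl
    · have hex : ∃ i, u i ≠ 0 := by
        by_contra hc
        push_neg at hc
        exact h0 (funext fun k => hc k)
      obtain ⟨i, hi⟩ := hex
      set u' : ℕ → ℕ := u - xvar i with hu'
      have hui : u = u' + xvar i := by
        funext k
        simp only [hu', Pi.add_apply, Pi.sub_apply, xvar]
        by_cases hk : k = i
        · subst hk; simp; omega
        · simp [hk]
      have hiN : i < N := by
        by_contra hc
        exact hi (hN i (by omega))
      have hN' : ∀ k, N ≤ k → u' k = 0 := by
        intro k hk
        simp only [hu', Pi.sub_apply, xvar]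
        rw [hN k hk]; simp
      have hS' : S u' N ≤ d := by
        have h1 : S u N = S u' N + 1 := by
          rw [hui, S_add, S_xvar, if_pos hiN]
        omega
      exact Relation.ReflTransGen.head (Or.inr ⟨i, hui⟩) (ih u' hN' hS')

lemma stGE_zero {u : ℕ → ℕ} (hu : u ∈ Mon) : stGE u 0 := by
  obtain ⟨N, hN⟩ : ∃ N, ∀ k, N ≤ k → u k = 0 := by
    obtain ⟨s, hs⟩ := hu.exists_finset_coe
    rcases s.eq_empty_or_nonempty with h | h
    · exact ⟨0, fun k _ => by
        by_contra hc
        have : k ∈ Function.support u := hc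
        rw [← hs, h] at this; simp at this⟩
    · refine ⟨s.max' h + 1, fun k hk => ?_⟩
      by_contra hc
      have hks : k ∈ s := by rw [← Finset.mem_coe, hs]; exact hc
      have := Finset.le_max' s k hks
      omega
  exact stGE_zero_aux N (S u N) u hN le_rfl

lemma dom_stGE_aux (N : ℕ) : ∀ d u v, (∀ k, N ≤ k → v k = 0) → S v N ≤ d →
    u ∈ Mon → dom u v → stGE u v := by
  intro d
  induction d with
  | zero =>
    intro u v hN hS hu _
    have : v = 0 := by
      funext k
      by_cases hk : k < N
      · exact Finset.sum_eq_zero_iff.1 (Nat.le_zero.1 hS) k (Finset.mem_range.2 hk)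
      · exact hN k (by omega)
    subst this
    exact stGE_zero hu
  | succ d ih =>
    intro u v hN hS hu hdom
    by_cases h0 : v = 0
    · subst h0; exact stGE_zero hu
    · have hex : ∃ j, v j ≠ 0 := by
        by_contra hc; push_neg at hc; exact h0 (funext fun k => hc k)
      -- least j with v j ≠ 0
      set j := Nat.find hex with hj
      have hvj : v j ≠ 0 := Nat.find_spec hex
      have hjmin : ∀ t, t < j → v t = 0 := fun t ht => by
        by_contra hc; exact Nat.find_min hex ht hc
      -- exists i ≤ j with u i ≠ 0, from S v (j+1) ≥ 1 ≤ S u (j+1)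
      have hSv : 1 ≤ S v (j+1) := by
        rw [S_succ]; omega
      have hSu : 1 ≤ S u (j+1) := le_trans hSv (hdom (j+1))
      have hexi : ∃ i, i < j + 1 ∧ u i ≠ 0 := by
        by_contra hc
        push_neg at hc
        have : S u (j+1) = 0 := Finset.sum_eq_zero fun x hx =>
          hc x (Finset.mem_range.1 hx)
        omega
      obtain ⟨i, hij, hui⟩ := hexi
      set u' : ℕ → ℕ := u - xvar i with hu'
      set v' : ℕ → ℕ := v - xvar j with hv'
      have hueq : u = u' + xvar i := by
        funext k
        simp only [hu', Pi.add_apply, Pi.sub_apply, xvar]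
        by_cases hk : k = i
        · subst hk; simp; omega
        · simp [hk]
      have hveq : v = v' + xvar j := by
        funext k
        simp only [hv', Pi.add_apply, Pi.sub_apply, xvar]
        by_cases hk : k = j
        · subst hk; simp; omega
        · simp [hk]
      have hjN : j < N := by
        by_contra hc; exact hvj (hN j (by omega))
      have hN' : ∀ k, N ≤ k → v' k = 0 := fun k hk => by
        simp only [hv', Pi.sub_apply, xvar]; rw [hN k hk]; simp
      have hS' : S v' N ≤ d := by
        have : S v N = S v' N + 1 := by rw [hveq, S_add, S_xvar, if_pos hjN]
        omega
      have hu'Mon : u' ∈ Mon := by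
        apply hu.subset
        intro x hx
        simp only [Function.mem_support, hu', Pi.sub_apply] at hx ⊢
        omega
      have hdom' : dom u' v' := by
        intro k
        have h1 : S u k = S u' k + (if i < k then 1 else 0) := by
          rw [hueq, S_add, S_xvar]
        have h2 : S v k = S v' k + (if j < k then 1 else 0) := by
          rw [hveq, S_add, S_xvar]
        by_cases hk : k ≤ j
        · -- S v' k = 0
          have : S v' k = 0 := Finset.sum_eq_zero fun x hx => by
            have hxk : x < k := Finset.mem_range.1 hx
            simp only [hv', Pi.sub_apply, xvar]
            rw [hjmin x (by omega)]
            simp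
          omega
        · have := hdom k
          have hik : i < k := by omega
          rw [if_pos hik] at h1
          rw [if_pos (by omega : j < k)] at h2
          omega
      have hGE' : stGE u' v' := ih u' v' hN' hS' hu'Mon hdom'
      have h1 : stGE (u' + xvar i) (v' + xvar i) := stGE_add (xvar i) hGE'
      have h2 : stStep (v' + xvar i) (v' + xvar j) :=
        Or.inl ⟨i, j, v', by omega, rfl, rfl⟩
      rw [hueq, hveq]
      exact h1.tail h2

lemma dom_stGE {u v : ℕ → ℕ} (hu : u ∈ Mon) (hv : v ∈ Mon) (h : dom u v) : stGE u v := by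
  obtain ⟨N, hN⟩ : ∃ N, ∀ k, N ≤ k → v k = 0 := by
    obtain ⟨s, hs⟩ := hv.exists_finset_coe
    rcases s.eq_empty_or_nonempty with he | he
    · exact ⟨0, fun k _ => by
        by_contra hc
        have : k ∈ Function.support v := hc
        rw [← hs, he] at this; simp at this⟩
    · refine ⟨s.max' he + 1, fun k hk => ?_⟩
      by_contra hc
      have hks : k ∈ s := by rw [← Finset.mem_coe, hs]; exact hc
      have := Finset.le_max' s k hks
      omega
  exact dom_stGE_aux N (S v N) u v hN le_rfl hu h

end Core2
section Core3

lemma mon_bound {u : ℕ → ℕ} (hu : u ∈ Mon) : ∃ N, ∀ k, N ≤ k → u k = 0 := by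
  obtain ⟨s, hs⟩ := hu.exists_finset_coe
  rcases s.eq_empty_or_nonempty with he | he
  · exact ⟨0, fun k _ => by
      by_contra hc
      have : k ∈ Function.support u := hc
      rw [← hs, he] at this; simp at this⟩
  · refine ⟨s.max' he + 1, fun k hk => ?_⟩
    by_contra hc
    have hks : k ∈ s := by rw [← Finset.mem_coe, hs]; exact hc
    have := Finset.le_max' s k hks
    omega

lemma S_stab {u : ℕ → ℕ} {N : ℕ} (hN : ∀ k, N ≤ k → u k = 0) {k : ℕ} (hk : N ≤ k) :
    S u k = S u N := by
  induction k with
  | zero =>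
    have h0 : N = 0 := by omega
    rw [h0]
  | succ k ih =>
    rcases Nat.lt_or_ge k N with h | h
    · have h1 : N = k + 1 := by omega
      rw [h1]
    · rw [S_succ, hN k h, ih h]
      omega

lemma S_le_total {u : ℕ → ℕ} {N : ℕ} (hN : ∀ k, N ≤ k → u k = 0) (k : ℕ) :
    S u k ≤ S u N := by
  rcases Nat.le_total k N with h | h
  · exact S_mono u h
  · rw [S_stab hN h]

lemma S_singleMon (i e k : ℕ) : S (singleMon i e) k = if i < k then e else 0 := by
  unfold S singleMon
  split <;> rename_i h
  · rw [Finset.sum_eq_single i] <;> simp_all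
  · apply Finset.sum_eq_zero; intro x hx; simp only [Finset.mem_range] at hx
    simp only [ite_eq_right_iff]; omega

lemma singleMon_mon (i e : ℕ) : singleMon i e ∈ Mon := by
  apply Set.Finite.subset (Set.finite_singleton i)
  intro x hx
  simp only [Function.mem_support, singleMon] at hx
  simp only [Set.mem_singleton_iff]
  by_contra hc
  exact hx (if_neg hc)

/-- Membership in the span of a set of generators, via dominance. -/
lemma mem_sstSpan_iff {G : Set (ℕ → ℕ)} (hG : G ⊆ Mon) (u : ℕ → ℕ) :
    u ∈ sstSpan G ↔ u ∈ Mon ∧ ∃ v ∈ G, dom u v := by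
  constructor
  · rintro ⟨v, hvG, hge⟩
    exact ⟨stGE_mon hge (hG hvG), v, hvG, stGE_dom_s11 hge⟩
  · rintro ⟨hu, v, hvG, hdom⟩
    exact ⟨v, hvG, dom_stGE hu (hG hvG) hdom⟩

/-- Telescoping: partial sums of `Λ g` recover `g`. -/
lemma S_Lmap {g : NNhat} (hg : Monotone g) (hfin : ∀ n, g n ≠ ⊤) (k : ℕ) :
    S (Lmap g) (k+1) = (g k).toNat := by
  induction k with
  | zero => simp [S, Lmap, Finset.sum_range_one]
  | succ k ih =>
    rw [S_succ, ih]
    show (g k).toNat + ((g (k+1)).toNat - (g k).toNat) = (g (k+1)).toNat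
    have hmono : (g k).toNat ≤ (g (k+1)).toNat :=
      ENat.toNat_le_toNat (hg (Nat.le_succ k)) (hfin (k+1))
    omega

lemma small_fin {g : NNhat} (hs : SmallMap g) (n : ℕ) : g n ≠ ⊤ := by
  obtain ⟨N, hN⟩ := hs
  exact fun h => by simpa [h] using hN n

/-- `Λ g` is finitely supported for `g` small monotone. -/
lemma Lmap_mon {g : NNhat} (hg : Monotone g) (hs : SmallMap g) : Lmap g ∈ Mon := by
  obtain ⟨N, hN⟩ := hs
  by_contra hc
  have hinf : (Function.support (Lmap g)).Infinite := hc
  obtain ⟨t, hts, htc⟩ := hinf.exists_subset_card_eq (N+1)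
  have hne : t.Nonempty := by
    rw [← Finset.card_pos, htc]; omega
  set K := t.max' hne with hK
  have htr : t ⊆ Finset.range (K+1) := fun x hx =>
    Finset.mem_range.2 (by have := Finset.le_max' t x hx; omega)
  have h1 : ∑ x ∈ t, Lmap g x ≤ S (Lmap g) (K+1) := by
    exact Finset.sum_le_sum_of_subset htr
  have h2 : N + 1 ≤ ∑ x ∈ t, Lmap g x := by
    calc N + 1 = ∑ _x ∈ t, 1 := by rw [Finset.sum_const, htc]; simp
    _ ≤ ∑ x ∈ t, Lmap g x := Finset.sum_le_sum fun x hx => by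
        have : Lmap g x ≠ 0 := hts hx
        omega
  have h3 : S (Lmap g) (K+1) = (g K).toNat := S_Lmap hg (small_fin ⟨N, hN⟩) K
  have h4 : (g K).toNat ≤ N := by
    have h5 := hN K
    exact ENat.toNat_le_of_le_coe h5
  omega

/-- Reconstructing `g` from a monomial `u` by partial sums. -/
lemma Lmap_of_S (u : ℕ → ℕ) : Lmap (fun i => ((S u (i+1) : ℕ) : ℕ∞)) = u := by
  funext k
  cases k with
  | zero => simp [Lmap, S, Finset.sum_range_one]
  | succ k =>
    show (((S u (k+2) : ℕ) : ℕ∞)).toNat - (((S u (k+1) : ℕ) : ℕ∞)).toNat = u (k+1)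
    simp only [ENat.toNat_coe]
    rw [S_succ u (k+1)]
    omega

end Core3
section Core4

open Finset

variable {n : ℕ} (c : Fin n → ℕ)

/-- The monomial `y_A` of a sequence. -/
def ymon : ℕ → ℕ := fun t => Nat.card {i : Fin n // c i = t + 1}

lemma ymon_eq_card (t : ℕ) :
    ymon c t = (Finset.univ.filter fun i => c i = t + 1).card := by
  rw [ymon, Nat.card_eq_fintype_card, Fintype.card_subtype]

lemma S_ymon (hpos : ∀ i, 1 ≤ c i) (k : ℕ) :
    S (ymon c) k = (Finset.univ.filter fun i => c i ≤ k).card := by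
  induction k with
  | zero =>
    have h0 : (Finset.univ.filter fun i => c i ≤ 0) = ∅ := by
      apply Finset.filter_eq_empty_iff.2
      intro i _
      have := hpos i
      omega
    rw [h0]
    simp [S]
  | succ k ih =>
    rw [S_succ, ih, ymon_eq_card]
    have hsplit : (Finset.univ.filter fun i => c i ≤ k + 1) =
        (Finset.univ.filter fun i => c i ≤ k) ∪ (Finset.univ.filter fun i => c i = k + 1) := by
      ext i
      simp only [Finset.mem_filter, Finset.mem_union, Finset.mem_univ, true_and]
      omega
    rw [hsplit, Finset.card_union_of_disjoint]
    rw [Finset.disjoint_filter]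
    intro i _ h1
    omega

lemma ymon_mem_Mon (M : ℕ) (hM : ∀ i, c i ≤ M) : ymon c ∈ Mon := by
  apply Set.Finite.subset (Set.finite_Icc 0 M)
  intro t ht
  simp only [Function.mem_support, ymon_eq_card] at ht
  have hne : (Finset.univ.filter fun i => c i = t + 1).Nonempty := by
    rw [← Finset.card_pos]; omega
  obtain ⟨i, hi⟩ := hne
  simp only [Finset.mem_filter] at hi
  have := hM i
  simp only [Set.mem_Icc]
  omega

/-- Cardinality bound: at least `i+1` elements `i'` with `c i' ≤ c i`. -/
lemma card_le_filter (hmono : Monotone c) (i : Fin n) :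
    (i : ℕ) + 1 ≤ (Finset.univ.filter fun i' => c i' ≤ c i).card := by
  have : (i : ℕ) + 1 = (Finset.range ((i : ℕ) + 1)).card := by simp
  rw [this]
  apply Finset.card_le_card_of_injOn (fun t => ⟨min t i, lt_of_le_of_lt (min_le_right t i) i.isLt⟩)
  · intro t ht
    simp only [Finset.mem_coe, Finset.mem_range] at ht
    simp only [Finset.mem_coe, Finset.mem_filter, Finset.mem_univ, true_and]
    exact hmono (by simp [Fin.le_def])
  · intro t1 h1 t2 h2 heq
    simp only [Finset.mem_coe, Finset.mem_range] at h1 h2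
    have := congrArg Fin.val heq
    simp only at this
    omega

end Core4
section Core5

lemma isOpen_basic {p q : HomNN} (hp : SmallMap p.1) (hq : LargeMap q.1) :
    IsOpen {f : HomNN | p ≤ f ∧ f ≤ q} :=
  TopologicalSpace.isOpen_generateFrom_of_mem ⟨p, q, hp, hq, rfl⟩

/-- The bottom element of `HomNN`. -/
def botHom : HomNN := ⟨fun _ => 0, monotone_const⟩

lemma botHom_small : SmallMap botHom.1 := ⟨0, fun _ => by simp [botHom]⟩

lemma botHom_le (f : HomNN) : botHom ≤ f := fun n => by
  simp [botHom]

/-- The top element of `HomNN`. -/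
def topHom : HomNN := ⟨fun _ => ⊤, monotone_const⟩

lemma topHom_large : LargeMap topHom.1 := ⟨0, rfl⟩

lemma le_topHom (f : HomNN) : f ≤ topHom := fun n => le_top

lemma enat_le_pred_iff (x : ℕ∞) (e : ℕ) (he : 1 ≤ e) :
    x ≤ ((e - 1 : ℕ) : ℕ∞) ↔ x < (e : ℕ∞) := by
  induction x using ENat.recTopCoe with
  | top => simp
  | coe k =>
    rw [Nat.cast_le, Nat.cast_lt]
    omega

end Core5
section Core6

open Finset

lemma enat_lt_succ_iff (x : ℕ∞) (k : ℕ) :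
    x < (k : ℕ∞) + 1 ↔ x < (k : ℕ∞) ∨ x = (k : ℕ∞) := by
  induction x using ENat.recTopCoe with
  | top =>
    constructor
    · intro h
      exact absurd h not_top_lt
    · rintro (h | h)
      · exact absurd h not_top_lt
      · exact absurd h (by simp)
  | coe m =>
    rw [show ((k : ℕ∞) + 1) = ((k + 1 : ℕ) : ℕ∞) by push_cast; ring]
    rw [Nat.cast_lt, Nat.cast_lt, Nat.cast_inj]
    omega

lemma Gmap_eq_card {f : NNhat} {K : ℕ} (htop : ∀ i, f i = ⊤ ↔ K ≤ i) (t : ℕ) :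
    Gmap f t = ((Finset.range K).filter fun i => f i = (t : ℕ∞)).card := by
  have hset : {i : ℕ | f i = (t : ℕ∞)} =
      ↑((Finset.range K).filter fun i => f i = (t : ℕ∞)) := by
    ext i
    simp only [Set.mem_setOf_eq, Finset.coe_filter, Finset.mem_range, Set.mem_setOf_eq]
    constructor
    · intro h
      refine ⟨?_, h⟩
      by_contra hc
      rw [(htop i).2 (by omega)] at h
      exact (ENat.top_ne_coe t) h
    · exact And.right
  calc Gmap f t = Nat.card {i : ℕ | f i = (t : ℕ∞)} := rfl
    _ = ({i : ℕ | f i = (t : ℕ∞)} : Set ℕ).ncard := (Nat.card_coe_set_eq _)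
    _ = _ := by rw [hset, Set.ncard_coe_finset]

lemma S_Gmap {f : NNhat} {K : ℕ} (htop : ∀ i, f i = ⊤ ↔ K ≤ i) (k : ℕ) :
    S (Gmap f) k = ((Finset.range K).filter fun i => f i < (k : ℕ∞)).card := by
  induction k with
  | zero =>
    have h0 : ((Finset.range K).filter fun i => f i < ((0 : ℕ) : ℕ∞)) = ∅ := by
      apply Finset.filter_eq_empty_iff.2
      intro i _
      simp
    rw [h0]
    simp [S]
  | succ k ih =>
    rw [S_succ, ih, Gmap_eq_card htop]
    have hsplit : ((Finset.range K).filter fun i => f i < ((k + 1 : ℕ) : ℕ∞)) =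
        ((Finset.range K).filter fun i => f i < (k : ℕ∞)) ∪
        ((Finset.range K).filter fun i => f i = (k : ℕ∞)) := by
      ext i
      simp only [Finset.mem_filter, Finset.mem_union, Finset.mem_range]
      rw [show ((k + 1 : ℕ) : ℕ∞) = (k : ℕ∞) + 1 by push_cast; ring, enat_lt_succ_iff]
      tauto
    rw [hsplit, Finset.card_union_of_disjoint]
    rw [Finset.disjoint_filter]
    intro i _ h1 h2
    rw [h2] at h1
    exact lt_irrefl _ h1

lemma Gmap_mem_Mon {f : NNhat} {K : ℕ} (htop : ∀ i, f i = ⊤ ↔ K ≤ i) : Gmap f ∈ Mon := by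
  apply Set.Finite.subset ((Finset.range K).image fun i => (f i).toNat).finite_toSet
  intro t ht
  simp only [Function.mem_support, Gmap_eq_card htop] at ht
  have hne : ((Finset.range K).filter fun i => f i = (t : ℕ∞)).Nonempty := by
    rw [← Finset.card_pos]; omega
  obtain ⟨i, hi⟩ := hne
  simp only [Finset.mem_filter, Finset.mem_range] at hi
  simp only [Finset.coe_image, Set.mem_image, Finset.mem_coe, Finset.mem_range]
  exact ⟨i, hi.1, by rw [hi.2]; simp⟩

end Core6
section Core7

/-- Construction of a large monotone map realizing a monomial `u` via `Γ`. -/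
lemma exists_large_of_mon {u : ℕ → ℕ} (hu : u ∈ Mon) :
    ∃ f : HomNN, LargeMap f.1 ∧ Gmap f.1 = u ∧
      ∀ i e : ℕ, 1 ≤ e → i < S u e → f.1 i < (e : ℕ∞) := by
  obtain ⟨N, hN⟩ := mon_bound hu
  set D := S u N with hD
  have hSle : ∀ k, S u k ≤ D := S_le_total hN
  have hex : ∀ i, i < D → ∃ t, i < S u (t + 1) := by
    intro i hi
    refine ⟨N, ?_⟩
    rw [S_stab hN (Nat.le_succ N)]
    exact hi
  set fd : NNhat := fun i => if h : i < D then ((Nat.find (hex i h) : ℕ) : ℕ∞) else ⊤ with hfd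
  have hfd_lt : ∀ i (h : i < D), fd i = ((Nat.find (hex i h) : ℕ) : ℕ∞) := by
    intro i h
    simp only [hfd, dif_pos h]
  have hfd_top : ∀ i, D ≤ i → fd i = ⊤ := by
    intro i h
    simp only [hfd, dif_neg (by omega : ¬ i < D)]
  have hmono : Monotone fd := by
    intro i i' hii
    by_cases h1 : i < D
    · by_cases h2 : i' < D
      · rw [hfd_lt i h1, hfd_lt i' h2, Nat.cast_le]
        apply Nat.find_le
        exact lt_of_le_of_lt hii (Nat.find_spec (hex i' h2))
      · rw [hfd_top i' (by omega)]
        exact le_top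
    · have h2 : ¬ i' < D := by omega
      rw [hfd_top i (by omega), hfd_top i' (by omega)]
  -- characterization of fd values
  have hval : ∀ i t : ℕ, fd i = (t : ℕ∞) ↔ (S u t ≤ i ∧ i < S u (t + 1)) := by
    intro i t
    by_cases h1 : i < D
    · rw [hfd_lt i h1, Nat.cast_inj]
      constructor
      · intro heq
        constructor
        · rcases Nat.eq_zero_or_pos t with h0 | h0
          · subst h0
            have : S u 0 = 0 := by simp [S]
            omega
          · have := Nat.find_min (hex i h1) (show t - 1 < Nat.find (hex i h1) by omega)
            have hst : S u (t - 1 + 1) = S u t := by congr 1; omega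
            omega
        · rw [← heq]
          exact Nat.find_spec (hex i h1)
      · intro ⟨ha, hb⟩
        rw [Nat.find_eq_iff]
        refine ⟨hb, fun t' ht' => ?_⟩
        have : S u (t' + 1) ≤ S u t := S_mono u (by omega)
        omega
    · rw [hfd_top i (by omega)]
      constructor
      · intro h
        exact absurd h (by simp)
      · intro ⟨_, hb⟩
        have := hSle (t + 1)
        omega
  refine ⟨⟨fd, hmono⟩, ⟨D, hfd_top D le_rfl⟩, ?_, ?_⟩
  · -- Gmap fd = u
    funext t
    have hset : {i : ℕ | fd i = (t : ℕ∞)} = Set.Ico (S u t) (S u (t + 1)) := by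
      ext i
      simp only [Set.mem_setOf_eq, Set.mem_Ico]
      exact hval i t
    calc Gmap fd t = Nat.card {i : ℕ | fd i = (t : ℕ∞)} := rfl
      _ = Nat.card (Set.Ico (S u t) (S u (t + 1))) := by rw [hset]
      _ = (Set.Ico (S u t) (S u (t + 1))).ncard := Nat.card_coe_set_eq _
      _ = (Finset.Ico (S u t) (S u (t + 1))).card := by
            rw [← Finset.coe_Ico, Set.ncard_coe_finset]
      _ = S u (t + 1) - S u t := Nat.card_Ico _ _
      _ = u t := by rw [S_succ]; omega
  · -- the lt property
    intro i e he hie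
    have h1 : i < D := lt_of_lt_of_le hie (hSle e)
    show fd i < (e : ℕ∞)
    rw [hfd_lt i h1]
    rw [Nat.cast_lt]
    have : Nat.find (hex i h1) ≤ e - 1 := by
      apply Nat.find_min'
      have : S u (e - 1 + 1) = S u e := by congr 1; omega
      omega
    omega

end Core7
section Core8

variable {n : ℕ}

/-- The upper bound map of a sequence. -/
def bHom (c : Fin n → ℕ) (hmono : Monotone c) : HomNN :=
  ⟨fun i => if h : i < n then ((c ⟨i, h⟩ - 1 : ℕ) : ℕ∞) else ⊤, by
    intro i i' hii
    by_cases h1 : i < n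
    · by_cases h2 : i' < n
      · simp only [dif_pos h1, dif_pos h2, Nat.cast_le]
        exact Nat.sub_le_sub_right (hmono (by exact hii)) 1
      · simp only [dif_neg h2]
        exact le_top
    · have h2 : ¬ i' < n := by omega
      simp only [dif_neg h1, dif_neg h2, le_refl]⟩

lemma bHom_large (c : Fin n → ℕ) (hmono : Monotone c) : LargeMap (bHom c hmono).1 :=
  ⟨n, by simp only [bHom, dif_neg (lt_irrefl n)]⟩

lemma le_bHom_iff (c : Fin n → ℕ) (hmono : Monotone c) (hpos : ∀ i, 1 ≤ c i) (f : HomNN) :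
    f ≤ bHom c hmono ↔ ∀ i (h : i < n), f.1 i < ((c ⟨i, h⟩ : ℕ) : ℕ∞) := by
  constructor
  · intro hle i h
    have h2 := hle i
    rw [show (bHom c hmono).1 i = ((c ⟨i, h⟩ - 1 : ℕ) : ℕ∞) from dif_pos h] at h2
    exact (enat_le_pred_iff _ _ (hpos _)).1 h2
  · intro hc i
    show f.1 i ≤ (bHom c hmono).1 i
    by_cases h : i < n
    · rw [show (bHom c hmono).1 i = ((c ⟨i, h⟩ - 1 : ℕ) : ℕ∞) from dif_pos h]
      exact (enat_le_pred_iff _ _ (hpos _)).2 (hc i h)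
    · rw [show (bHom c hmono).1 i = ⊤ from dif_neg h]
      exact le_top

/-- Truncation of a map at level `M`. -/
def truncHom (f : HomNN) (M : ℕ) : HomNN :=
  ⟨fun i => min (f.1 i) (M : ℕ∞), fun i j h => min_le_min (f.2 h) le_rfl⟩

lemma truncHom_small (f : HomNN) (M : ℕ) : SmallMap (truncHom f M).1 :=
  ⟨M, fun i => min_le_right _ _⟩

lemma truncHom_le (f : HomNN) (M : ℕ) : truncHom f M ≤ f := fun i => min_le_left _ _

end Core8
/-- `⟨y_{A_1}, …, y_{A_r}⟩` and `⟨x^{A_1}⟩ ∩ ⋯ ∩ ⟨x^{A_r}⟩` are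
dual strongly stable ideals, where `A_j` is the weakly increasing sequence
`a j 0 ≤ … ≤ a j (m j - 1)` of positive integers (zero-based indexing, variable
`x_k` at Lean index `k - 1`). -/
theorem stmt11 (r : ℕ) (hr : 0 < r) (m : Fin r → ℕ) (hm : ∀ j, 0 < m j)
    (a : (j : Fin r) → Fin (m j) → ℕ)
    (hmono : ∀ j, Monotone (a j)) (hpos : ∀ j i, 1 ≤ a j i) :
    IsDualPair
      (sstSpan {v | ∃ j : Fin r, v = fun t => Nat.card {i : Fin (m j) // a j i = t + 1}})
      (⋂ j : Fin r, sstSpan {v | ∃ i : Fin (m j), v = singleMon (i : ℕ) (a j i)}) := by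
  classical
  obtain ⟨M, haM⟩ : ∃ M : ℕ, ∀ j i, a j i ≤ M :=
    ⟨Finset.univ.sup fun j => Finset.univ.sup (a j), fun j i =>
      le_trans (Finset.le_sup (f := a j) (Finset.mem_univ i))
        (Finset.le_sup (f := fun j' => Finset.univ.sup (a j')) (Finset.mem_univ j))⟩
  have hGMon : {v | ∃ j : Fin r, v = fun t => Nat.card {i : Fin (m j) // a j i = t + 1}} ⊆ Mon := by
    rintro v ⟨j, rfl⟩
    exact ymon_mem_Mon (a j) M (haM j)
  have hsMon : ∀ j : Fin r, {v | ∃ i : Fin (m j), v = singleMon (i : ℕ) (a j i)} ⊆ Mon := by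
    rintro j v ⟨i, rfl⟩
    exact singleMon_mon _ _
  refine ⟨⋃ j : Fin r, {f : HomNN | botHom ≤ f ∧ f ≤ bHom (a j) (hmono j)}, ?_, ?_, ?_, ?_, ?_⟩
  case refine_1 => exact isOpen_iUnion fun j => isOpen_basic botHom_small (bHom_large _ _)
  all_goals
    set I : Set HomNN := ⋃ j : Fin r, {f : HomNN | botHom ≤ f ∧ f ≤ bHom (a j) (hmono j)}
      with hIdef
  · -- lower set
    intro f g hgf hfI
    simp only [hIdef, Set.mem_iUnion, Set.mem_setOf_eq] at hfI ⊢
    obtain ⟨j, -, hle⟩ := hfI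
    exact ⟨j, botHom_le g, le_trans hgf hle⟩
  all_goals
    have hImem : ∀ f : HomNN, f ∈ I ↔
        ∃ j, ∀ i (h : i < m j), f.1 i < ((a j ⟨i, h⟩ : ℕ) : ℕ∞) := by
      intro f
      simp only [hIdef, Set.mem_iUnion, Set.mem_setOf_eq]
      constructor
      · rintro ⟨j, -, hle⟩
        exact ⟨j, (le_bHom_iff _ _ (hpos j) f).1 hle⟩
      · rintro ⟨j, hj⟩
        exact ⟨j, botHom_le f, (le_bHom_iff _ _ (hpos j) f).2 hj⟩
  all_goals
    have hcopen : IsOpen Iᶜ := by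
      have hrep : Iᶜ = ⋃ (f : HomNN) (_ : f ∈ Iᶜ),
          {g : HomNN | truncHom f M ≤ g ∧ g ≤ topHom} := by
        ext g
        simp only [Set.mem_iUnion, Set.mem_setOf_eq]
        constructor
        · intro hg
          exact ⟨g, hg, truncHom_le g M, le_topHom g⟩
        · rintro ⟨f, hf, hle, -⟩
          simp only [Set.mem_compl_iff] at hf ⊢
          intro hgI
          rw [hImem g] at hgI
          obtain ⟨j, hj⟩ := hgI
          rw [hImem f] at hf
          push_neg at hf
          obtain ⟨i, h, hfi⟩ := hf j
          have h1 : ((a j ⟨i, h⟩ : ℕ) : ℕ∞) ≤ (truncHom f M).1 i :=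
            le_min hfi (Nat.cast_le.2 (haM j ⟨i, h⟩))
          exact absurd (hj i h) (not_lt.2 (h1.trans (hle i)))
      rw [hrep]
      exact isOpen_biUnion fun f _ => isOpen_basic (truncHom_small f M) topHom_large
  · -- regular open
    rw [(isOpen_compl_iff.1 hcopen).closure_eq]
    rw [(isOpen_iUnion fun j => isOpen_basic botHom_small (bHom_large (a j) (hmono j))
      : IsOpen I).interior_eq]
  · -- Gamma
    ext u
    constructor
    · rintro ⟨f, hfI, hlarge, rfl⟩
      rw [hImem] at hfI
      obtain ⟨j, hj⟩ := hfI
      set K := Nat.find hlarge with hK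
      have htop : ∀ i, f.1 i = ⊤ ↔ K ≤ i := by
        intro i
        constructor
        · intro h
          by_contra hc
          exact Nat.find_min hlarge (by omega) h
        · intro h
          exact top_le_iff.1 (le_trans (le_of_eq (Nat.find_spec hlarge).symm) (f.2 h))
      rw [mem_sstSpan_iff hGMon]
      refine ⟨Gmap_mem_Mon htop, ymon (a j), ⟨j, rfl⟩, ?_⟩
      intro k
      show S (ymon (a j)) k ≤ S (Gmap f.1) k
      rw [S_ymon (a j) (hpos j), S_Gmap htop]
      refine Finset.card_le_card_of_injOn (fun i : Fin (m j) => (i : ℕ)) ?_ ?_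
      · intro i hi
        simp only [Finset.mem_coe, Finset.mem_filter, Finset.mem_univ, true_and] at hi
        have hfi : f.1 (i : ℕ) < ((a j i : ℕ) : ℕ∞) := by
          have h2 := hj (i : ℕ) i.isLt
          simpa using h2
        have hik : f.1 (i : ℕ) < (k : ℕ∞) := lt_of_lt_of_le hfi (Nat.cast_le.2 hi)
        have hiK : (i : ℕ) < K := by
          by_contra hc
          rw [(htop _).2 (by omega)] at hik
          exact absurd hik not_top_lt
        simp only [Finset.mem_coe, Finset.mem_filter, Finset.mem_range]
        exact ⟨hiK, hik⟩
      · intro i1 _ i2 _ h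
        exact Fin.val_injective h
    · rintro ⟨w, ⟨j, rfl⟩, hge⟩
      have hu : u ∈ Mon := stGE_mon hge (ymon_mem_Mon (a j) M (haM j))
      have hdom : dom u (ymon (a j)) := stGE_dom_s11 hge
      obtain ⟨f, hlarge, hGf, hprop⟩ := exists_large_of_mon hu
      refine ⟨f, ?_, hlarge, hGf.symm⟩
      rw [hImem]
      refine ⟨j, fun i h => ?_⟩
      apply hprop i (a j ⟨i, h⟩) (hpos j _)
      have h1 := hdom (a j ⟨i, h⟩)
      rw [S_ymon (a j) (hpos j)] at h1
      have h2 : (i : ℕ) + 1 ≤ (Finset.univ.filter fun i' => a j i' ≤ a j ⟨i, h⟩).card :=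
        card_le_filter (a j) (hmono j) ⟨i, h⟩
      omega
  · -- Lambda
    rw [hcopen.interior_eq]
    ext u
    simp only [Set.mem_iInter]
    constructor
    · rintro ⟨g, hgF, hgs, rfl⟩ j
      have hfin : ∀ n', g.1 n' ≠ ⊤ := small_fin hgs
      have huMon : Lmap g.1 ∈ Mon := Lmap_mon g.2 hgs
      simp only [Set.mem_compl_iff] at hgF
      rw [hImem] at hgF
      push_neg at hgF
      obtain ⟨i, h, hgi⟩ := hgF j
      rw [mem_sstSpan_iff (hsMon j)]
      refine ⟨huMon, singleMon i (a j ⟨i, h⟩), ⟨⟨i, h⟩, rfl⟩, ?_⟩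
      intro k
      show S (singleMon i (a j ⟨i, h⟩)) k ≤ S (Lmap g.1) k
      rw [S_singleMon]
      split
      · rename_i hik
        have h1 : S (Lmap g.1) (i + 1) = (g.1 i).toNat := S_Lmap g.2 hfin i
        have h2 : a j ⟨i, h⟩ ≤ (g.1 i).toNat := by
          have h3 := ENat.toNat_le_toNat hgi (hfin i)
          simpa using h3
        calc a j ⟨i, h⟩ ≤ S (Lmap g.1) (i + 1) := by omega
          _ ≤ S (Lmap g.1) k := S_mono _ (by omega)
      · omega
    · intro hu
      have huMon : u ∈ Mon := by
        have h0 := hu ⟨0, hr⟩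
        rw [mem_sstSpan_iff (hsMon _)] at h0
        exact h0.1
      obtain ⟨N, hN⟩ := mon_bound huMon
      refine ⟨⟨fun i => ((S u (i + 1) : ℕ) : ℕ∞),
        fun i i' hii => Nat.cast_le.2 (S_mono u (by omega))⟩, ?_,
        ⟨S u N, fun n' => Nat.cast_le.2 (S_le_total hN _)⟩, (Lmap_of_S u).symm⟩
      simp only [Set.mem_compl_iff]
      intro hgI
      rw [hImem] at hgI
      obtain ⟨j, hj⟩ := hgI
      have hj' := hu j
      rw [mem_sstSpan_iff (hsMon j)] at hj'
      obtain ⟨-, w, ⟨i, rfl⟩, hdom⟩ := hj'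
      have h1 := hdom ((i : ℕ) + 1)
      rw [S_singleMon, if_pos (by omega)] at h1
      have h2 := hj (i : ℕ) i.isLt
      have h3 : ((S u ((i : ℕ) + 1) : ℕ) : ℕ∞) < ((a j i : ℕ) : ℕ∞) := by
        simpa using h2
      rw [Nat.cast_lt] at h3
      omega

end
end

section
/- Let ℐ be a poset ideal of Hom(ℕ,ℕ̂), ℱ its complement (a poset filter), and 𝒥 = { Dh : h ∈ ℱ } its dual poset ideal. Then a monotone map g : ℕ → ℕ̂ belongs to 𝒥 (equivalently, Dg ∉ ℐ) if and only if for every f ∈ ℐ there exists p ∈ ℕ with f(p) finite and g(f(p)) ≤ p. No openness or regularity assumptions on ℐ are needed. -/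
noncomputable section


lemma Ddual_le_iff {g : NNhat} (hg : Monotone g) (p q : ℕ) :
    Ddual g p ≤ (q : ℕ∞) ↔ (p : ℕ∞) < g q := by
  constructor
  · intro h
    by_contra hc
    push_neg at hc
    have h2 : (((q + 1 : ℕ)) : ℕ∞) ≤ Ddual g p := by
      apply le_sInf
      rintro s ⟨r, hr, rfl⟩
      have hq : q + 1 ≤ r := by
        by_contra hqr
        push_neg at hqr
        have hrq : r ≤ q := by omega
        exact absurd (lt_of_lt_of_le hr (le_trans (hg hrq) hc)) (lt_irrefl _)
      show (((q + 1 : ℕ)) : ℕ∞) ≤ (r : ℕ∞)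
      exact_mod_cast hq
    have := Nat.cast_le.mp (le_trans h2 h)
    omega
  · intro h
    exact sInf_le ⟨q, h, rfl⟩

lemma Ddual_monotone {g : NNhat} : Monotone (Ddual g) := by
  intro p p' hpp'
  apply sInf_le_sInf
  rintro s ⟨r, hr, rfl⟩
  refine ⟨r, ?_, rfl⟩
  exact lt_of_le_of_lt (show (p : ℕ∞) ≤ p' by exact_mod_cast hpp') hr

lemma Ddual_Ddual {g : NNhat} (hg : Monotone g) : Ddual (Ddual g) = g := by
  funext p
  have hset : {q : ℕ | (p : ℕ∞) < Ddual g q} = {q : ℕ | g p ≤ (q : ℕ∞)} := by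
    ext q
    simp only [Set.mem_setOf_eq]
    rw [← not_le, Ddual_le_iff hg, not_lt]
  show sInf ((fun q : ℕ => (q : ℕ∞)) '' {q : ℕ | (p : ℕ∞) < Ddual g q}) = g p
  rw [hset]
  rcases eq_or_ne (g p) ⊤ with h | h
  · have : {q : ℕ | g p ≤ (q : ℕ∞)} = ∅ := by
      ext q; simp [h]
    rw [this, h]; simp
  · lift g p to ℕ using h with n hn
    apply le_antisymm
    · exact sInf_le ⟨n, by simp, rfl⟩
    · apply le_sInf
      rintro s ⟨r, hr, rfl⟩
      exact hr

/-- for a poset ideal `ℐ` with complement filter `ℱ` and dual poset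
ideal `𝒥 = { Dh : h ∈ ℱ }`, a monotone map `g` lies in `𝒥` iff for every `f ∈ ℐ`
there is `p` with `f(p)` finite and `g(f(p)) ≤ p`.  No openness or regularity is
assumed. -/
theorem stmt12 (ℐ : Set HomNN) (hlower : IsLowerSet ℐ) (g : HomNN) :
    (∃ h : HomNN, h ∉ ℐ ∧ g.1 = Ddual h.1) ↔
      ∀ f ∈ ℐ, ∃ p : ℕ, f.1 p ≠ ⊤ ∧ g.1 ((f.1 p).toNat) ≤ (p : ℕ∞) := by
  constructor
  · rintro ⟨h, hh, hg⟩ f hf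
    have hle : ¬ ∀ p, h.1 p ≤ f.1 p := fun hall => hh (hlower hall hf)
    push_neg at hle
    obtain ⟨p, hp⟩ := hle
    have hfp : f.1 p ≠ ⊤ := (lt_of_lt_of_le hp le_top).ne
    refine ⟨p, hfp, ?_⟩
    rw [hg, Ddual_le_iff h.2]
    rwa [ENat.coe_toNat hfp]
  · intro hyp
    refine ⟨⟨Ddual g.1, Ddual_monotone⟩, ?_, (Ddual_Ddual g.2).symm⟩
    intro hmem
    obtain ⟨p, hfin, hle⟩ := hyp _ hmem
    have h1 : Ddual g.1 p ≤ (((Ddual g.1 p).toNat : ℕ) : ℕ∞) := by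
      rw [ENat.coe_toNat hfin]
    rw [Ddual_le_iff g.2] at h1
    exact absurd hle (not_le.mpr h1)

end
end

section
/- For all monotone maps f, g : ℕ → ℕ̂: f ⪰_lex g if and only if Df ⪯_lex Dg. That is, the duality D reverses the lexicographic order on Hom(ℕ,ℕ̂). -/
noncomputable section

lemma ddual_le_iff {f : NNhat} (hf : Monotone f) (p q : ℕ) :
    Ddual f p ≤ (q : ℕ∞) ↔ (p : ℕ∞) < f q := by
  constructor
  · intro h
    by_contra hc
    push_neg at hc
    have hlt : (q : ℕ∞) < Ddual f p := by
      have : ((q + 1 : ℕ) : ℕ∞) ≤ Ddual f p := by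
        apply le_sInf
        rintro b ⟨q', hq', rfl⟩
        have hq'q : q < q' := by
          by_contra hqq
          push_neg at hqq
          exact absurd (lt_of_lt_of_le hq' (hf hqq)) (not_lt.mpr hc)
        show ((q + 1 : ℕ) : ℕ∞) ≤ ((q' : ℕ) : ℕ∞)
        exact_mod_cast hq'q
      calc (q : ℕ∞) < ((q + 1 : ℕ) : ℕ∞) := by exact_mod_cast Nat.lt_succ_self q
        _ ≤ Ddual f p := this
    exact absurd h (not_le.mpr hlt)
  · intro h
    exact sInf_le ⟨q, h, rfl⟩

lemma ddual_mono {f : NNhat} : Monotone (Ddual f) := by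
  intro p p' hpp
  apply sInf_le_sInf
  rintro b ⟨q, hq, rfl⟩
  exact ⟨q, lt_of_le_of_lt (show (p : ℕ∞) ≤ (p' : ℕ∞) by exact_mod_cast hpp) hq, rfl⟩

lemma ddual_ddual {f : NNhat} (hf : Monotone f) : Ddual (Ddual f) = f := by
  funext q
  have hset : {p : ℕ | (q : ℕ∞) < Ddual f p} = {p : ℕ | f q ≤ (p : ℕ∞)} := by
    ext p
    rw [Set.mem_setOf_eq, Set.mem_setOf_eq, ← not_le, ddual_le_iff hf, not_lt]
  show sInf ((fun p : ℕ => (p : ℕ∞)) '' {p : ℕ | (q : ℕ∞) < Ddual f p}) = f q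
  rw [hset]
  rcases eq_or_ne (f q) ⊤ with ht | ht
  · rw [ht]
    have he : {p : ℕ | (⊤ : ℕ∞) ≤ (p : ℕ∞)} = ∅ := by
      ext p; simp
    rw [he, Set.image_empty, sInf_empty]
  · obtain ⟨n, hn⟩ : ∃ n : ℕ, (n : ℕ∞) = f q := ⟨(f q).toNat, ENat.coe_toNat ht⟩
    rw [← hn]
    apply le_antisymm
    · exact sInf_le ⟨n, Set.mem_setOf_eq ▸ le_refl ((n : ℕ∞)), rfl⟩
    · apply le_sInf
      rintro b ⟨p, hp, rfl⟩
      exact hp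

lemma ddual_le_of_first_diff {f g : NNhat} (hf : Monotone f) (hg : Monotone g)
    {r p : ℕ} (heq : ∀ i < r, f i = g i)
    (h1 : (p : ℕ∞) < f r) (h2 : (p : ℕ∞) < g r) :
    Ddual f p ≤ Ddual g p := by
  have hgr : Ddual g p ≤ (r : ℕ∞) := (ddual_le_iff hg p r).mpr h2
  have hne : Ddual g p ≠ ⊤ := ne_top_of_le_ne_top (by simp) hgr
  obtain ⟨q, hq⟩ : ∃ q : ℕ, (q : ℕ∞) = Ddual g p := ⟨(Ddual g p).toNat, ENat.coe_toNat hne⟩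
  have hqr : q ≤ r := by rw [← hq] at hgr; exact_mod_cast hgr
  have hpq : (p : ℕ∞) < g q := (ddual_le_iff hg p q).mp (le_of_eq hq.symm)
  have hfq : (p : ℕ∞) < f q := by
    rcases lt_or_eq_of_le hqr with hlt | rfl
    · rw [heq q hlt]; exact hpq
    · exact h1
  rw [← hq]
  exact (ddual_le_iff hf p q).mpr hfq

lemma dual_lexGT {f g : NNhat} (hf : Monotone f) (hg : Monotone g)
    (h : lexGT f g) : lexGT (Ddual g) (Ddual f) := by
  obtain ⟨r, heq, hlt⟩ := h
  have hgrt : g r ≠ ⊤ := ne_top_of_lt hlt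
  obtain ⟨m, hm⟩ : ∃ m : ℕ, (m : ℕ∞) = g r := ⟨(g r).toNat, ENat.coe_toNat hgrt⟩
  refine ⟨m, ?_, ?_⟩
  · intro p hp
    have hpm : (p : ℕ∞) < g r := by rw [← hm]; exact_mod_cast hp
    have hpf : (p : ℕ∞) < f r := lt_trans hpm hlt
    exact le_antisymm (ddual_le_of_first_diff hg hf (fun i hi => (heq i hi).symm) hpm hpf)
      (ddual_le_of_first_diff hf hg heq hpf hpm)
  · have hDf : Ddual f m ≤ (r : ℕ∞) := (ddual_le_iff hf m r).mpr (by rw [hm]; exact hlt)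
    have hDg : (r : ℕ∞) < Ddual g m := by
      by_contra hc
      push_neg at hc
      have := (ddual_le_iff hg m r).mp hc
      rw [← hm] at this
      exact lt_irrefl _ this
    exact lt_of_le_of_lt hDf hDg

/-- the duality `D` reverses the lexicographic order:
`f ⪰_lex g ↔ Df ⪯_lex Dg`. -/
theorem stmt13 (f g : NNhat) (hf : Monotone f) (hg : Monotone g) :
    lexGE f g ↔ lexGE (Ddual g) (Ddual f) := by
  constructor
  · rintro (rfl | h)
    · exact Or.inl rfl
    · exact Or.inr (dual_lexGT hf hg h)
  · rintro (h | h)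
    · left
      have := congrArg Ddual h
      rw [ddual_ddual hg, ddual_ddual hf] at this
      exact this.symm
    · right
      have := dual_lexGT (ddual_mono (f := g)) (ddual_mono (f := f)) h
      rwa [ddual_ddual hf, ddual_ddual hg] at this

end
end

section
/- Let f : ℕ → ℕ be a monotone map with all values finite and unbounded image. Then ℐ(f) = { g ∈ Hom(ℕ,ℕ̂) : g ≺_lex f } is a regular open poset ideal and ℱ(f) = { g ∈ Hom(ℕ,ℕ̂) : g ≻_lex f } is a regular open poset filter; each is the interior of the complement of the other (so [ℐ(f), ℱ(f)] is a Dedekind cut), and the gap Hom(ℕ,ℕ̂) \ (ℐ(f) ∪ ℱ(f)) equals the singleton {f}. -/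
noncomputable section StmtAux

open TopologicalSpace

lemma lexGT_irrefl (f : NNhat) : ¬ lexGT f f := by
  rintro ⟨r, _, hlt⟩; exact lt_irrefl _ hlt

/-- Lower-set property of the lex cut. -/
lemma lexGT_of_le {f g h : NNhat} (hle : h ≤ g) (hfg : lexGT f g) : lexGT f h := by
  obtain ⟨r, hr, hlt⟩ := hfg
  have hne : ∃ i, f i ≠ h i := by
    by_contra hc
    push_neg at hc
    exact absurd (lt_of_le_of_lt ((hc r) ▸ hle r) hlt) (lt_irrefl _)
  refine ⟨Nat.find hne, fun i hi => not_not.mp (Nat.find_min hne hi), ?_⟩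
  set r' := Nat.find hne with hr'
  have hne' : f r' ≠ h r' := Nat.find_spec hne
  rcases lt_trichotomy (h r') (f r') with h1 | h1 | h1
  · exact h1
  · exact absurd h1.symm hne'
  · exfalso
    rcases lt_trichotomy r r' with hc | hc | hc
    · have heq : f r = h r := not_not.mp (Nat.find_min hne hc)
      exact absurd (lt_of_le_of_lt (heq ▸ hle r) hlt) (lt_irrefl _)
    · rw [hc] at hlt
      exact absurd (lt_trans h1 (lt_of_le_of_lt (hle r') hlt)) (lt_irrefl _)
    · exact absurd (lt_of_lt_of_le h1 ((hr r' hc) ▸ hle r')) (lt_irrefl _)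

/-- Upper-set property of the lex cut. -/
lemma lexGT_of_ge {f g h : NNhat} (hle : g ≤ h) (hgf : lexGT g f) : lexGT h f := by
  obtain ⟨r, hr, hlt⟩ := hgf
  have hne : ∃ i, h i ≠ f i := by
    by_contra hc
    push_neg at hc
    exact absurd (lt_of_lt_of_le hlt ((hc r) ▸ hle r)) (lt_irrefl _)
  refine ⟨Nat.find hne, fun i hi => not_not.mp (Nat.find_min hne hi), ?_⟩
  set r' := Nat.find hne with hr'
  have hne' : h r' ≠ f r' := Nat.find_spec hne
  rcases lt_trichotomy (f r') (h r') with h1 | h1 | h1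
  · exact h1
  · exact absurd h1 hne'.symm
  · exfalso
    rcases lt_trichotomy r r' with hc | hc | hc
    · have heq : h r = f r := not_not.mp (Nat.find_min hne hc)
      exact absurd (lt_of_lt_of_le hlt (le_of_le_of_eq (hle r) heq)) (lt_irrefl _)
    · rw [hc] at hlt
      exact absurd (lt_trans (lt_of_lt_of_le hlt (hle r')) h1) (lt_irrefl _)
    · exact absurd (lt_of_le_of_lt (le_of_eq_of_le (hr r' hc).symm (hle r')) h1)
        (lt_irrefl _)

/-- Lex trichotomy at the first index of difference. -/
lemma lexGT_trichotomy {f g : NNhat} (hne : f ≠ g) : lexGT f g ∨ lexGT g f := by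
  have h : ∃ i, f i ≠ g i := Function.ne_iff.mp hne
  set r := Nat.find h with hrdef
  have hs : f r ≠ g r := Nat.find_spec h
  have hmin : ∀ i < r, f i = g i := fun i hi => not_not.mp (Nat.find_min h hi)
  rcases lt_trichotomy (g r) (f r) with h1 | h1 | h1
  · exact Or.inl ⟨r, hmin, h1⟩
  · exact absurd h1.symm hs
  · exact Or.inr ⟨r, fun i hi => (hmin i hi).symm, h1⟩

def BasisSets : Set (Set HomNN) :=
  {S | ∃ a b : HomNN, SmallMap a.1 ∧ LargeMap b.1 ∧ S = {f : HomNN | a ≤ f ∧ f ≤ b}}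

lemma homNN_basis : IsTopologicalBasis BasisSets := by
  refine ⟨?_, ?_, rfl⟩
  · rintro t₁ ⟨a₁, b₁, ⟨N₁, hN₁⟩, ⟨n₁, hn₁⟩, rfl⟩ t₂ ⟨a₂, b₂, ⟨N₂, hN₂⟩, ⟨n₂, hn₂⟩, rfl⟩
      x ⟨⟨hxa₁, hxb₁⟩, hxa₂, hxb₂⟩
    refine ⟨{f : HomNN | (⟨fun n => max (a₁.1 n) (a₂.1 n), a₁.2.max a₂.2⟩ : HomNN) ≤ f ∧
        f ≤ ⟨fun n => min (b₁.1 n) (b₂.1 n), b₁.2.min b₂.2⟩},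
        ⟨_, _, ⟨max N₁ N₂, fun n => max_le (le_trans (hN₁ n) (by exact_mod_cast le_max_left N₁ N₂))
            (le_trans (hN₂ n) (by exact_mod_cast le_max_right N₁ N₂))⟩,
          ⟨max n₁ n₂, ?_⟩, rfl⟩, ⟨?_, ?_⟩, ?_⟩
    · have h1 : b₁.1 (max n₁ n₂) = ⊤ :=
        top_le_iff.mp (hn₁ ▸ b₁.2 (le_max_left n₁ n₂))
      have h2 : b₂.1 (max n₁ n₂) = ⊤ :=
        top_le_iff.mp (hn₂ ▸ b₂.2 (le_max_right n₁ n₂))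
      simp [h1, h2]
    · exact fun n => max_le (hxa₁ n) (hxa₂ n)
    · exact fun n => le_min (hxb₁ n) (hxb₂ n)
    · rintro h ⟨hah, hhb⟩
      exact ⟨⟨fun n => le_trans (le_max_left _ _) (hah n),
              fun n => le_trans (hhb n) (min_le_left _ _)⟩,
             fun n => le_trans (le_max_right _ _) (hah n),
             fun n => le_trans (hhb n) (min_le_right _ _)⟩
  · apply Set.eq_univ_of_univ_subset
    rintro x -
    refine Set.mem_sUnion.mpr ⟨{f : HomNN | (⟨fun _ => 0, monotone_const⟩ : HomNN) ≤ f ∧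
        f ≤ ⟨fun _ => ⊤, monotone_const⟩}, ⟨_, _, ⟨0, fun _ => le_refl _⟩, ⟨0, rfl⟩, rfl⟩,
        fun n => zero_le, fun n => le_top⟩

/-- The upper bound used to show `ℐ(f)` is open. -/
def capMap (g : HomNN) (r : ℕ) : HomNN :=
  ⟨fun n => if n ≤ r then g.1 n else ⊤, by
    intro i j hij
    by_cases hj : j ≤ r
    · simp only [if_pos (le_trans hij hj), if_pos hj]
      exact g.2 hij
    · simp only [if_neg hj]
      exact le_top⟩

/-- The lower bound used to show `ℱ(f)` is open. -/
def floorMap (f : HomNN) (r : ℕ) : HomNN :=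
  ⟨fun n => if n < r then f.1 n else f.1 r + 1, by
    intro i j hij
    by_cases hj : j < r
    · simp only [if_pos (lt_of_le_of_lt hij hj), if_pos hj]
      exact f.2 hij
    · simp only [if_neg hj]
      by_cases hi : i < r
      · simp only [if_pos hi]
        exact le_trans (f.2 hi.le) (le_self_add)
      · simp only [if_neg hi]
        exact le_rfl⟩

lemma isOpen_idealSet (f : HomNN) : IsOpen {g : HomNN | lexGT f.1 g.1} := by
  rw [homNN_basis.isOpen_iff]
  rintro g ⟨r, hr, hlt⟩
  refine ⟨{h : HomNN | (⟨fun _ => 0, monotone_const⟩ : HomNN) ≤ h ∧ h ≤ capMap g r},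
      ⟨_, _, ⟨0, fun _ => le_refl _⟩, ⟨r + 1, by simp [capMap]⟩, rfl⟩,
      ⟨fun n => zero_le, fun n => ?_⟩, ?_⟩
  · show g.1 n ≤ if n ≤ r then g.1 n else ⊤
    split <;> simp
  · rintro h ⟨-, hhb⟩
    have hfb : lexGT f.1 (capMap g r).1 := by
      refine ⟨r, fun i hi => ?_, ?_⟩
      · show f.1 i = if i ≤ r then g.1 i else ⊤
        rw [if_pos hi.le]; exact hr i hi
      · show (if r ≤ r then g.1 r else ⊤) < f.1 r
        rw [if_pos le_rfl]; exact hlt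
    exact lexGT_of_le hhb hfb

lemma isOpen_filterSet (f : HomNN) (hfin : ∀ n, f.1 n ≠ ⊤) :
    IsOpen {g : HomNN | lexGT g.1 f.1} := by
  rw [homNN_basis.isOpen_iff]
  rintro g ⟨r, hr, hlt⟩
  obtain ⟨K, hK⟩ : ∃ K : ℕ, f.1 r = (K : ℕ∞) := by
    cases hfr : f.1 r with
    | top => exact absurd hfr (hfin r)
    | coe k => exact ⟨k, rfl⟩
  refine ⟨{h : HomNN | floorMap f r ≤ h ∧ h ≤ ⟨fun _ => ⊤, monotone_const⟩},
      ⟨_, _, ⟨K + 1, fun n => ?_⟩, ⟨0, rfl⟩, rfl⟩, ⟨fun n => ?_, fun n => le_top⟩, ?_⟩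
  · show (if n < r then f.1 n else f.1 r + 1) ≤ ((K + 1 : ℕ) : ℕ∞)
    push_cast
    by_cases hn : n < r
    · rw [if_pos hn]
      exact le_trans (f.2 hn.le) (hK ▸ le_self_add)
    · rw [if_neg hn, hK]
  · show (if n < r then f.1 n else f.1 r + 1) ≤ g.1 n
    by_cases hn : n < r
    · rw [if_pos hn]
      exact le_of_eq (hr n hn).symm
    · rw [if_neg hn]
      push_neg at hn
      refine le_trans ?_ (g.2 hn)
      rw [hK]
      exact_mod_cast Order.add_one_le_of_lt (hK ▸ hlt)
  · rintro h ⟨hah, -⟩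
    have haf : lexGT (floorMap f r).1 f.1 := by
      refine ⟨r, fun i hi => ?_, ?_⟩
      · show (if i < r then f.1 i else f.1 r + 1) = f.1 i
        rw [if_pos hi]
      · show f.1 r < if r < r then f.1 r else f.1 r + 1
        rw [if_neg (lt_irrefl r), hK]
        exact_mod_cast Nat.lt_succ_self K
    exact lexGT_of_ge hah haf

/-- Density of the ideal at `f`: every basic neighbourhood of `f` meets `ℐ(f)`. -/
lemma ideal_dense (f : HomNN) (hunb : ∀ N : ℕ, ∃ n, (N : ℕ∞) < f.1 n)
    (a b : HomNN) (ha : SmallMap a.1) (hab : a ≤ f ∧ f ≤ b) :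
    ∃ g : HomNN, (a ≤ g ∧ g ≤ b) ∧ lexGT f.1 g.1 := by
  obtain ⟨N, hN⟩ := ha
  have hex : ∃ n, (N : ℕ∞) < f.1 n := hunb N
  set r := Nat.find hex with hrdef
  have hfr : (N : ℕ∞) < f.1 r := Nat.find_spec hex
  have hsmall : ∀ i < r, f.1 i ≤ (N : ℕ∞) := fun i hi => not_lt.mp (Nat.find_min hex hi)
  refine ⟨⟨fun n => if n < r then f.1 n else (N : ℕ∞), ?_⟩, ⟨fun n => ?_, fun n => ?_⟩,
      r, fun i hi => ?_, ?_⟩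
  · intro i j hij
    by_cases hj : j < r
    · simp only [if_pos (lt_of_le_of_lt hij hj), if_pos hj]
      exact f.2 hij
    · simp only [if_neg hj]
      by_cases hi : i < r
      · simp only [if_pos hi]
        exact hsmall i hi
      · simp only [if_neg hi, le_refl]
  · show a.1 n ≤ if n < r then f.1 n else (N : ℕ∞)
    by_cases hn : n < r
    · rw [if_pos hn]; exact hab.1 n
    · rw [if_neg hn]; exact hN n
  · show (if n < r then f.1 n else (N : ℕ∞)) ≤ b.1 n
    by_cases hn : n < r
    · rw [if_pos hn]
      exact hab.2 n
    · rw [if_neg hn]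
      push_neg at hn
      exact le_trans (le_trans hfr.le (f.2 hn)) (hab.2 n)
  · show f.1 i = if i < r then f.1 i else (N : ℕ∞)
    rw [if_pos hi]
  · show (if r < r then f.1 r else (N : ℕ∞)) < f.1 r
    rw [if_neg (lt_irrefl r)]
    exact hfr

/-- Density of the filter at `f`: every basic neighbourhood of `f` meets `ℱ(f)`. -/
lemma filter_dense (f : HomNN) (hfin : ∀ n, f.1 n ≠ ⊤)
    (a b : HomNN) (hb : LargeMap b.1) (hab : a ≤ f ∧ f ≤ b) :
    ∃ g : HomNN, (a ≤ g ∧ g ≤ b) ∧ lexGT g.1 f.1 := by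
  obtain ⟨m, hm⟩ := hb
  refine ⟨⟨fun n => if n < m then f.1 n else ⊤, ?_⟩, ⟨fun n => ?_, fun n => ?_⟩,
      m, fun i hi => ?_, ?_⟩
  · intro i j hij
    by_cases hj : j < m
    · simp only [if_pos (lt_of_le_of_lt hij hj), if_pos hj]
      exact f.2 hij
    · simp only [if_neg hj, le_top]
  · show a.1 n ≤ if n < m then f.1 n else ⊤
    split
    · exact hab.1 n
    · exact le_top
  · show (if n < m then f.1 n else ⊤) ≤ b.1 n
    by_cases hn : n < m
    · rw [if_pos hn]
      exact hab.2 n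
    · rw [if_neg hn]
      push_neg at hn
      exact le_of_eq (top_le_iff.mp (hm ▸ b.2 hn)).symm
  · show (if i < m then f.1 i else ⊤) = f.1 i
    rw [if_pos hi]
  · show f.1 m < if m < m then f.1 m else ⊤
    rw [if_neg (lt_irrefl m)]
    exact lt_top_iff_ne_top.mpr (hfin m)

end StmtAux

noncomputable section

/-- for `f` monotone with finite values and unbounded image, the lex
cut at `f` gives a Dedekind cut: `ℐ(f) = {g ≺_lex f}` is a regular open poset ideal,
`ℱ(f) = {g ≻_lex f}` is a regular open poset filter, each is the interior of the
complement of the other, and the gap is exactly `{f}`. -/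
theorem stmt14 (f : HomNN) (hfin : ∀ n, f.1 n ≠ ⊤)
    (hunb : ∀ N : ℕ, ∃ n, (N : ℕ∞) < f.1 n) :
    IsOpen {g : HomNN | lexGT f.1 g.1} ∧
    IsLowerSet {g : HomNN | lexGT f.1 g.1} ∧
    {g : HomNN | lexGT f.1 g.1} = interior (closure {g : HomNN | lexGT f.1 g.1}) ∧
    IsOpen {g : HomNN | lexGT g.1 f.1} ∧
    IsUpperSet {g : HomNN | lexGT g.1 f.1} ∧
    {g : HomNN | lexGT g.1 f.1} = interior (closure {g : HomNN | lexGT g.1 f.1}) ∧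
    {g : HomNN | lexGT g.1 f.1} = interior {g : HomNN | lexGT f.1 g.1}ᶜ ∧
    {g : HomNN | lexGT f.1 g.1} = interior {g : HomNN | lexGT g.1 f.1}ᶜ ∧
    ({g : HomNN | lexGT f.1 g.1} ∪ {g : HomNN | lexGT g.1 f.1})ᶜ = {f} := by
  set ℐ := {g : HomNN | lexGT f.1 g.1} with hIdef
  set ℱ := {g : HomNN | lexGT g.1 f.1} with hFdef
  have hIopen : IsOpen ℐ := isOpen_idealSet f
  have hFopen : IsOpen ℱ := isOpen_filterSet f hfin
  have hIlower : IsLowerSet ℐ := fun g h hle hg => lexGT_of_le hle hg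
  have hFupper : IsUpperSet ℱ := fun g h hle hg => lexGT_of_ge hle hg
  have hdisj : ∀ g : HomNN, g ∈ ℐ → g ∈ ℱ → False := by
    rintro g ⟨r, hr, hlt⟩ ⟨r', hr', hlt'⟩
    rcases lt_trichotomy r r' with hc | hc | hc
    · exact absurd ((hr' r hc) ▸ hlt) (lt_irrefl _)
    · exact absurd (lt_trans hlt (hc ▸ hlt')) (lt_irrefl _)
    · exact absurd ((hr r' hc) ▸ hlt') (lt_irrefl _)
  have hfI : f ∉ ℐ := fun h => lexGT_irrefl f.1 h
  have hfF : f ∉ ℱ := fun h => lexGT_irrefl f.1 h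
  have hgap : (ℐ ∪ ℱ)ᶜ = {f} := by
    ext g
    simp only [Set.mem_compl_iff, Set.mem_union, Set.mem_singleton_iff]
    constructor
    · intro hg
      push_neg at hg
      by_contra hne
      have hne' : f.1 ≠ g.1 := fun h => hne (Subtype.ext h.symm)
      rcases lexGT_trichotomy hne' with h | h
      · exact hg.1 h
      · exact hg.2 h
    · rintro rfl
      exact fun h => h.elim hfI hfF
  -- interior of complement of the ideal is the filter
  have hFcompl : ℱ = interior ℐᶜ := by
    apply le_antisymm
    · exact interior_maximal (fun g hg hg' => hdisj g hg' hg) hFopen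
    · intro g hg
      obtain ⟨V, ⟨a, b, ha, hb, rfl⟩, hgV, hVsub⟩ :=
        homNN_basis.exists_subset_of_mem_open hg isOpen_interior
      have hVI : {h : HomNN | a ≤ h ∧ h ≤ b} ⊆ ℐᶜ := le_trans hVsub interior_subset
      by_cases hgf : g = f
      · exfalso
        obtain ⟨h, hhV, hhI⟩ := ideal_dense f hunb a b ha (hgf ▸ hgV)
        exact hVI hhV hhI
      · have : g ∉ ℐ := hVI hgV
        have hg' : g ∈ (ℐ ∪ ℱ)ᶜ ∪ ℱ := by
          by_cases hgF : g ∈ ℱ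
          · exact Or.inr hgF
          · exact Or.inl (fun h => h.elim this hgF)
        rcases hg' with h | h
        · rw [hgap] at h
          exact absurd h hgf
        · exact h
  have hIcompl : ℐ = interior ℱᶜ := by
    apply le_antisymm
    · exact interior_maximal (fun g hg hg' => hdisj g hg hg') hIopen
    · intro g hg
      obtain ⟨V, ⟨a, b, ha, hb, rfl⟩, hgV, hVsub⟩ :=
        homNN_basis.exists_subset_of_mem_open hg isOpen_interior
      have hVF : {h : HomNN | a ≤ h ∧ h ≤ b} ⊆ ℱᶜ := le_trans hVsub interior_subset
      by_cases hgf : g = f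
      · exfalso
        obtain ⟨h, hhV, hhF⟩ := filter_dense f hfin a b hb (hgf ▸ hgV)
        exact hVF hhV hhF
      · have : g ∉ ℱ := hVF hgV
        have hg' : g ∈ (ℐ ∪ ℱ)ᶜ ∪ ℐ := by
          by_cases hgI : g ∈ ℐ
          · exact Or.inr hgI
          · exact Or.inl (fun h => h.elim hgI this)
        rcases hg' with h | h
        · rw [hgap] at h
          exact absurd h hgf
        · exact h
  have hIreg : ℐ = interior (closure ℐ) := by
    rw [closure_eq_compl_interior_compl, ← hFcompl, ← hIcompl]
  have hFreg : ℱ = interior (closure ℱ) := by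
    rw [closure_eq_compl_interior_compl, ← hIcompl, ← hFcompl]
  exact ⟨hIopen, hIlower, hIreg, hFopen, hFupper, hFreg, hFcompl, hIcompl, hgap⟩

end
end
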